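/- arXiv:1906.06182 — 7 statements merged into one kernel-verified Lean document; each statement's English description precedes it below -/
import Mathlib

section
/- Let L : ℝ × ℝ × ℝ × ℝ → ℝ, (t,x,v,S) ↦ L(t,x,v,S), be of class C². Let a < b, s_a, x_a, x_b ∈ ℝ, let x* : [a,b] → ℝ be of class C² with x*(a) = x_a, x*(b) = x_b, and let S* : [a,b] → ℝ be of class C¹ with S*'(t) = L(t, x*(t), x*'(t), S*(t)) and S*(a) = s_a. Suppose x* is a maximizer: for every C² function x : [a,b] → ℝ with x(a) = x_a, x(b) = x_b and every C¹ function S : [a,b] → ℝ satisfying S'(t) = L(t, x(t), x'(t), S(t)) on [a,b] with S(a) = s_a, one has S(b) ≤ S*(b). Then for all t ∈ [a,b]: (∂L/∂x)(t, x*(t), x*'(t), S*(t)) − (d/dt)[(∂L/∂v)(t, x*(t), x*'(t), S*(t))] + (∂L/∂S)(t, x*(t), x*'(t), S*(t)) · (∂L/∂v)(t, x*(t), x*'(t), S*(t)) = 0 (the generalized Euler–Lagrange equation of Herglotz). -/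
/-- The partial derivative `∂L/∂x` of a Lagrangian `L(t,x,v,S)`. -/
noncomputable def Lx (L : ℝ × ℝ × ℝ × ℝ → ℝ) (t x v S : ℝ) : ℝ :=
  deriv (fun y => L (t, y, v, S)) x

/-- The partial derivative `∂L/∂v` of a Lagrangian `L(t,x,v,S)`. -/
noncomputable def Lv (L : ℝ × ℝ × ℝ × ℝ → ℝ) (t x v S : ℝ) : ℝ :=
  deriv (fun w => L (t, x, w, S)) v

/-- The partial derivative `∂L/∂S` of a Lagrangian `L(t,x,v,S)`. -/
noncomputable def LS (L : ℝ × ℝ × ℝ × ℝ → ℝ) (t x v S : ℝ) : ℝ :=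
  deriv (fun u => L (t, x, v, u)) S

/-!
Perturb `x*` to `x* + ε η` with `η a = η b = 0`. To first order the endpoint value moves from
`S*(b)` to `S*(b) + ε w(b)`, where `w` solves the linearized equation
`w' = L_x η + L_v η' + L_S w`, `w(a) = 0`. The quadratic error is controlled by Taylor's formula
and Grönwall's inequality, the perturbed solution itself coming from Picard–Lindelöf applied to the
field truncated outside a tube around `S*`. Maximality forces `w(b) ≤ 0` for all `η`, hence
`w(b) = 0` (replace `η` by `-η`). With the integrating factor `z = exp (-∫ L_S)` one has
`z(b) w(b) = ∫ z (L_x η + L_v η')`, which after an integration by parts is `∫ z E η` for the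
Euler–Lagrange residual `E`; the fundamental lemma of the calculus of variations gives `E = 0`.
-/

open Set Metric NNReal Function Filter Topology MeasureTheory
open scoped ContDiff

noncomputable def integratingFactor (c : ℝ → ℝ) (a t : ℝ) : ℝ := Real.exp (-∫ s in a..t, c s)

noncomputable def variationOfConstants (c g : ℝ → ℝ) (a t : ℝ) : ℝ :=
  (integratingFactor c a t)⁻¹ * ∫ s in a..t, integratingFactor c a s * g s

section LinearODE

variable {c g : ℝ → ℝ}

theorem integratingFactor_pos (c : ℝ → ℝ) (a t : ℝ) : 0 < integratingFactor c a t :=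
  Real.exp_pos _

theorem hasDerivAt_integratingFactor (hc : Continuous c) (a t : ℝ) :
    HasDerivAt (integratingFactor c a) (-c t * integratingFactor c a t) t := by
  unfold integratingFactor
  simpa [mul_comm] using (hc.integral_hasStrictDerivAt a t).hasDerivAt.neg.exp

theorem continuous_integratingFactor (hc : Continuous c) (a : ℝ) :
    Continuous (integratingFactor c a) :=
  continuous_iff_continuousAt.2 fun t => (hasDerivAt_integratingFactor hc a t).continuousAt

theorem variationOfConstants_self (c g : ℝ → ℝ) (a : ℝ) : variationOfConstants c g a a = 0 := by
  simp [variationOfConstants]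

theorem hasDerivAt_variationOfConstants (hc : Continuous c) (hg : Continuous g) (a t : ℝ) :
    HasDerivAt (variationOfConstants c g a) (c t * variationOfConstants c g a t + g t) t := by
  have hz := hasDerivAt_integratingFactor hc a t
  have hI := ((continuous_integratingFactor hc a).fun_mul hg).integral_hasStrictDerivAt a t
  have hz0 := (integratingFactor_pos c a t).ne'
  refine ((hz.fun_inv hz0).fun_mul hI.hasDerivAt).congr_deriv ?_
  simp only [variationOfConstants]
  field_simp

theorem integral_integratingFactor_mul_eq {A B η : ℝ → ℝ} {a b : ℝ} (hc : Continuous c)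
    (hA : Continuous A) (hB : ContDiff ℝ 1 B) (hη : ContDiff ℝ 1 η) (ha : η a = 0)
    (hb : η b = 0) :
    ∫ t in a..b, integratingFactor c a t * (A t * η t + B t * deriv η t)
      = ∫ t in a..b, integratingFactor c a t * (A t - deriv B t + c t * B t) * η t := by
  set z := integratingFactor c a
  have hz := continuous_integratingFactor hc a
  obtain ⟨hBd, hB'⟩ := contDiff_one_iff_deriv.1 hB
  obtain ⟨hηd, hη'⟩ := contDiff_one_iff_deriv.1 hη
  have hderiv : ∀ t, HasDerivAt (fun t => z t * B t * η t)
      (z t * (A t * η t + B t * deriv η t) - z t * (A t - deriv B t + c t * B t) * η t) t := by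
    intro t
    refine (((hasDerivAt_integratingFactor hc a t).fun_mul (hBd t).hasDerivAt).fun_mul
      (hηd t).hasDerivAt).congr_deriv ?_
    ring
  have hsub := intervalIntegral.integral_eq_sub_of_hasDerivAt (a := a) (b := b)
    (fun t _ => hderiv t)
    (by apply Continuous.intervalIntegrable; fun_prop)
  rw [intervalIntegral.integral_sub (by apply Continuous.intervalIntegrable; fun_prop)
    (by apply Continuous.intervalIntegrable; fun_prop), ha, hb] at hsub
  linarith

end LinearODE

theorem eqOn_zero_of_forall_integral_mul_eq_zero {f : ℝ → ℝ} {a b : ℝ} (hab : a < b)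
    (hf : ContinuousOn f (Icc a b))
    (h : ∀ g : ℝ → ℝ, ContDiff ℝ ∞ g → HasCompactSupport g → tsupport g ⊆ Ioo a b →
      ∫ t in a..b, g t * f t = 0) :
    EqOn f 0 (Icc a b) := by
  have hae := isOpen_Ioo.ae_eq_zero_of_integral_contDiff_smul_eq_zero (μ := volume)
    ((hf.mono Ioo_subset_Icc_self).locallyIntegrableOn measurableSet_Ioo)
    fun g hg hgc hgs => by
      rw [← h g hg hgc hgs, intervalIntegral.integral_of_le hab.le,
        setIntegral_eq_integral_of_forall_compl_eq_zero]
      · rfl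
      · intro t ht
        rw [image_eq_zero_of_notMem_tsupport fun h' => ht (Ioo_subset_Ioc_self (hgs h')),
          zero_mul]
  have hIoo : EqOn f 0 (Ioo a b) := Measure.eqOn_open_of_ae_eq
    ((ae_restrict_iff' measurableSet_Ioo).2 hae) isOpen_Ioo
    (hf.mono Ioo_subset_Icc_self) continuousOn_const
  exact hIoo.of_subset_closure hf continuousOn_const Ioo_subset_Icc_self
    (closure_Ioo hab.ne).superset

theorem gronwallBound_δ0 (K ε x : ℝ) :
    gronwallBound 0 K ε x = ε * gronwallBound 0 K 1 x := by
  by_cases hK : K = 0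
  · simp [gronwallBound_K0, hK]
  · simp [gronwallBound_of_K_ne_0 hK]
    ring

theorem Convex.norm_image_add_sub_sub_fderiv_le {E F : Type*} [NormedAddCommGroup E]
    [NormedSpace ℝ E] [NormedAddCommGroup F] [NormedSpace ℝ F] {f : E → F} {s : Set E}
    {K : ℝ≥0} {q h : E} (hs : Convex ℝ s) (hf : ∀ y ∈ s, DifferentiableAt ℝ f y)
    (hlip : LipschitzOnWith K (fderiv ℝ f) s) (hq : q ∈ s) (hqh : q + h ∈ s) :
    ‖f (q + h) - f q - fderiv ℝ f q h‖ ≤ K * ‖h‖ ^ 2 := by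
  have hseg := hs.segment_subset hq hqh
  have hbound : ∀ y ∈ segment ℝ q (q + h), ‖fderiv ℝ f y - fderiv ℝ f q‖ ≤ K * ‖h‖ := by
    intro y hy
    rw [← dist_eq_norm]
    refine (hlip.dist_le_mul y (hseg hy) q hq).trans ?_
    gcongr
    simpa [dist_eq_norm] using norm_sub_le_of_mem_segment hy
  have := (convex_segment q (q + h)).norm_image_sub_le_of_norm_fderiv_le'
    (fun y hy => hf y (hseg hy)) hbound (left_mem_segment ℝ _ _) (right_mem_segment ℝ _ _)
  simpa [pow_two, mul_assoc] using this

theorem ContDiff.exists_lipschitz_taylor_near_isCompact {E F : Type*} [NormedAddCommGroup E]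
    [NormedSpace ℝ E] [ProperSpace E] [NormedAddCommGroup F] [NormedSpace ℝ F] {f : E → F}
    (hf : ContDiff ℝ 2 f) {s : Set E} (hs : IsCompact s) :
    ∃ K₁ K₂ : ℝ≥0,
      (∀ q ∈ s, ∀ h₁ h₂ : E, ‖h₁‖ ≤ 1 → ‖h₂‖ ≤ 1 →
        ‖f (q + h₁) - f (q + h₂)‖ ≤ K₁ * ‖h₁ - h₂‖) ∧
      ∀ q ∈ s, ∀ h : E, ‖h‖ ≤ 1 → ‖f (q + h) - f q - fderiv ℝ f q h‖ ≤ K₂ * ‖h‖ ^ 2 := by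
  obtain ⟨R, hR⟩ := hs.isBounded.subset_closedBall 0
  set B := closedBall (0 : E) (R + 1)
  have hB : ∀ q ∈ s, ∀ h : E, ‖h‖ ≤ 1 → q + h ∈ B := fun q hq h hh =>
    mem_closedBall_zero_iff.2 ((norm_add_le _ _).trans
      (add_le_add (mem_closedBall_zero_iff.1 (hR hq)) hh))
  obtain ⟨K₁, hK₁⟩ := (hf.of_le (by norm_num)).locallyLipschitz.locallyLipschitzOn
    |>.exists_lipschitzOnWith_of_compact (isCompact_closedBall 0 (R + 1))
  obtain ⟨K₂, hK₂⟩ := (hf.fderiv_right (m := 1) (by norm_num)).locallyLipschitz.locallyLipschitzOn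
    |>.exists_lipschitzOnWith_of_compact (isCompact_closedBall 0 (R + 1))
  refine ⟨K₁, K₂, fun q hq h₁ h₂ hh₁ hh₂ => ?_, fun q hq h hh => ?_⟩
  · simpa [dist_eq_norm] using hK₁.dist_le_mul _ (hB q hq h₁ hh₁) _ (hB q hq h₂ hh₂)
  · exact (convex_closedBall _ _).norm_image_add_sub_sub_fderiv_le
      (fun y _ => hf.differentiable (by norm_num) y) hK₂
      (by simpa only [add_zero] using hB q hq 0 (by simp)) (hB q hq h hh)

theorem exists_contDiff_hasDerivAt_of_lipschitzWith {f : ℝ → ℝ → ℝ} {a b M : ℝ} {K : ℝ≥0}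
    (hab : a ≤ b) (hf : Continuous (uncurry f)) (hlip : ∀ t ∈ Icc a b, LipschitzWith K (f t))
    (hbound : ∀ t ∈ Icc a b, ∀ x, ‖f t x‖ ≤ M) (x₀ : ℝ) :
    ∃ α : ℝ → ℝ, ContDiff ℝ 1 α ∧ α a = x₀ ∧ ∀ t ∈ Icc a b, HasDerivAt α (f t (α t)) t := by
  have hM : 0 ≤ M := (norm_nonneg _).trans (hbound a ⟨le_rfl, hab⟩ x₀)
  have hPL : IsPicardLindelof f (⟨a, le_rfl, hab⟩ : Icc a b) x₀ (M * (b - a)).toNNReal 0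
      M.toNNReal K :=
    { lipschitzOnWith := fun t ht => (hlip t ht).lipschitzOnWith
      continuousOn := fun x _ => (hf.comp (continuous_id.prodMk continuous_const)).continuousOn
      norm_le := fun t ht x _ => (hbound t ht x).trans (Real.le_coe_toNNReal M)
      mul_max_le := by
        simp [Real.coe_toNNReal _ hM, Real.coe_toNNReal _ (mul_nonneg hM (sub_nonneg.2 hab)), hab] }
  obtain ⟨β, hβa, hβ⟩ := hPL.exists_eq_forall_mem_Icc_hasDerivWithinAt₀
  have hβc : ContinuousOn β (Icc a b) := fun t ht => (hβ t ht).continuousWithinAt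
  -- freeze time outside `[a, b]`, so that integrating `g` gives a `C¹` extension of `β`
  set c : ℝ → ℝ := fun s => projIcc a b hab s
  have hc : Continuous c := continuous_subtype_val.comp continuous_projIcc
  set g : ℝ → ℝ := fun s => f (c s) (β (c s))
  have hg : Continuous g :=
    hf.comp (hc.prodMk (hβc.comp_continuous hc fun s => (projIcc a b hab s).2))
  have hα : ∀ t, HasDerivAt (fun t => x₀ + ∫ s in a..t, g s) (g t) t :=
    fun t => (hg.integral_hasStrictDerivAt a t).hasDerivAt.const_add x₀
  have hαβ : ∀ t ∈ Icc a b, x₀ + ∫ s in a..t, g s = β t := by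
    intro t ht
    rw [intervalIntegral.integral_eq_sub_of_hasDerivAt_of_le ht.1
      (hβc.mono (Icc_subset_Icc_right ht.2)) (fun s hs => ?_) (hg.intervalIntegrable _ _),
      ← hβa]
    · ring
    · have hs' : s ∈ Icc a b := ⟨hs.1.le, hs.2.le.trans ht.2⟩
      simpa [g, c, projIcc_of_mem hab hs'] using
        (hβ s hs').hasDerivAt (Icc_mem_nhds hs.1 (hs.2.trans_le ht.2))
  refine ⟨fun t => x₀ + ∫ s in a..t, g s, ?_, by simp, fun t ht => ?_⟩
  · rw [contDiff_one_iff_deriv]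
    exact ⟨fun t => (hα t).differentiableAt, (funext fun t => (hα t).deriv).symm ▸ hg⟩
  · simpa [hαβ t ht, g, c, projIcc_of_mem hab ht] using hα t

theorem exists_solution_near_approx_trajectory {F : ℝ → ℝ → ℝ} {U W W' : ℝ → ℝ} {a b r δ : ℝ}
    {K : ℝ≥0} (hab : a ≤ b) (hF : Continuous (uncurry F)) (hU : Continuous U)
    (hlip : ∀ t ∈ Icc a b, LipschitzOnWith K (F t) (Icc (U t - r) (U t + r)))
    (hW : ∀ t ∈ Icc a b, HasDerivAt W (W' t) t)
    (happrox : ∀ t ∈ Icc a b, |W' t - F t (W t)| ≤ δ)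
    (htube : ∀ t ∈ Icc a b, |W t - U t| + gronwallBound 0 K δ (t - a) ≤ r) :
    ∃ S : ℝ → ℝ, ContDiff ℝ 1 S ∧ S a = W a ∧
      ∀ t ∈ Icc a b, HasDerivAt S (F t (S t)) t ∧ |S t - W t| ≤ gronwallBound 0 K δ (t - a) := by
  have ha : a ∈ Icc a b := ⟨le_rfl, hab⟩
  have hδ : 0 ≤ δ := (abs_nonneg _).trans (happrox a ha)
  have hgron : ∀ t ∈ Icc a b, 0 ≤ gronwallBound 0 K δ (t - a) := fun t ht => by
    simpa [gronwallBound_x0] using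
      gronwallBound_mono le_rfl hδ K.2 (sub_nonneg.2 ht.1 : (0 : ℝ) ≤ t - a)
  have hr : -r ≤ r := by linarith [abs_nonneg (W a - U a), htube a ha, hgron a ha]
  -- Truncated outside the tube, `F` becomes globally Lipschitz and bounded, so the solution exists
  -- on all of `[a, b]`; Grönwall keeps it inside the tube, where the truncation is inactive.
  set P : ℝ → ℝ := fun σ => projIcc (-r) r hr σ
  set G : ℝ → ℝ → ℝ := fun t σ => F t (U t + P (σ - U t))
  have hGF : ∀ t σ, |σ - U t| ≤ r → G t σ = F t σ := fun t σ hσ => by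
    simp [G, P, projIcc_of_mem hr (abs_le.1 hσ)]
  have hPmem : ∀ t σ, U t + P (σ - U t) ∈ Icc (U t - r) (U t + r) := fun t σ => by
    have := (projIcc (-r) r hr (σ - U t)).2
    constructor <;> linarith [this.1, this.2]
  have hG : Continuous (uncurry G) := hF.comp (continuous_fst.prodMk (hU.comp continuous_fst |>.add
    ((continuous_subtype_val.comp continuous_projIcc).comp
      (continuous_snd.sub (hU.comp continuous_fst)))))
  have hGlip : ∀ t ∈ Icc a b, LipschitzWith K (G t) := fun t ht =>
    LipschitzWith.of_dist_le_mul fun σ₁ σ₂ => by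
      refine ((hlip t ht).dist_le_mul _ (hPmem t σ₁) _ (hPmem t σ₂)).trans ?_
      gcongr
      simpa [P, Subtype.dist_eq] using
        (LipschitzWith.projIcc hr).dist_le_mul (σ₁ - U t) (σ₂ - U t)
  obtain ⟨M, hM⟩ := (isCompact_Icc.prod (isCompact_Icc (a := -r) (b := r)))
    |>.exists_bound_of_continuousOn (hF.comp (continuous_fst.prodMk ((hU.comp continuous_fst).add continuous_snd))).continuousOn
  have hGbound : ∀ t ∈ Icc a b, ∀ σ, ‖G t σ‖ ≤ M := fun t ht σ =>
    hM (t, P (σ - U t)) ⟨ht, (projIcc (-r) r hr _).2⟩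
  obtain ⟨S, hS, hSa, hSG⟩ := exists_contDiff_hasDerivAt_of_lipschitzWith hab hG hGlip hGbound (W a)
  have hclose : ∀ t ∈ Icc a b, dist (W t) (S t) ≤ gronwallBound 0 K (δ + 0) (t - a) := by
    refine dist_le_of_approx_trajectories_ODE_of_mem (s := fun _ => univ)
      (fun t ht => (hGlip t (Ico_subset_Icc_self ht)).lipschitzOnWith)
      (fun t ht => (hW t ht).continuousAt.continuousWithinAt)
      (fun t ht => (hW t (Ico_subset_Icc_self ht)).hasDerivWithinAt) (fun t ht => ?_)
      (fun _ _ => trivial) hS.continuous.continuousOn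
      (fun t ht => (hSG t (Ico_subset_Icc_self ht)).hasDerivWithinAt) (fun t _ => by simp)
      (fun _ _ => trivial) (by simp [hSa])
    have ht' := Ico_subset_Icc_self ht
    rw [Real.dist_eq, hGF t _ (by linarith [htube t ht', hgron t ht'])]
    exact happrox t ht'
  refine ⟨S, hS, hSa, fun t ht => ?_⟩
  have hSW : |S t - W t| ≤ gronwallBound 0 K δ (t - a) := by
    simpa [Real.dist_eq, abs_sub_comm] using hclose t ht
  refine ⟨?_, hSW⟩
  rw [← hGF t (S t) (by linarith [abs_sub_le (S t) (W t) (U t), htube t ht])]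
  exact hSG t ht

namespace Herglotz

def IsSolution (L : ℝ × ℝ × ℝ × ℝ → ℝ) (a b : ℝ) (x S : ℝ → ℝ) : Prop :=
  ∀ t ∈ Icc a b, HasDerivAt S (L (t, x t, deriv x t, S t)) t

def SolvesVariationalEquation (L : ℝ × ℝ × ℝ × ℝ → ℝ) (a b : ℝ) (x S η w : ℝ → ℝ) : Prop :=
  ∀ t ∈ Icc a b, HasDerivAt w (fderiv ℝ L (t, x t, deriv x t, S t) (0, η t, deriv η t, w t)) t

def IsMaximizer (L : ℝ × ℝ × ℝ × ℝ → ℝ) (a b : ℝ) (x S : ℝ → ℝ) : Prop :=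
  ∀ y : ℝ → ℝ, ContDiff ℝ 2 y → y a = x a → y b = x b →
    ∀ R : ℝ → ℝ, ContDiff ℝ 1 R → IsSolution L a b y R → R a = S a → R b ≤ S b

noncomputable def eulerLagrangeResidual (L : ℝ × ℝ × ℝ × ℝ → ℝ) (x S : ℝ → ℝ) (t : ℝ) : ℝ :=
  Lx L t (x t) (deriv x t) (S t) - deriv (fun τ => Lv L τ (x τ) (deriv x τ) (S τ)) t
    + LS L t (x t) (deriv x t) (S t) * Lv L t (x t) (deriv x t) (S t)

variable {L : ℝ × ℝ × ℝ × ℝ → ℝ} {a b : ℝ} {x S η w : ℝ → ℝ}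

theorem Lx_eq_fderiv (hL : Differentiable ℝ L) (t x v S : ℝ) :
    Lx L t x v S = fderiv ℝ L (t, x, v, S) (0, 1, 0, 0) :=
  ((hL _).hasFDerivAt.comp_hasDerivAt x ((hasDerivAt_const x t).prodMk
    ((hasDerivAt_id x).prodMk ((hasDerivAt_const x v).prodMk (hasDerivAt_const x S))))).deriv

theorem Lv_eq_fderiv (hL : Differentiable ℝ L) (t x v S : ℝ) :
    Lv L t x v S = fderiv ℝ L (t, x, v, S) (0, 0, 1, 0) :=
  ((hL _).hasFDerivAt.comp_hasDerivAt v ((hasDerivAt_const v t).prodMk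
    ((hasDerivAt_const v x).prodMk ((hasDerivAt_id v).prodMk (hasDerivAt_const v S))))).deriv

theorem LS_eq_fderiv (hL : Differentiable ℝ L) (t x v S : ℝ) :
    LS L t x v S = fderiv ℝ L (t, x, v, S) (0, 0, 0, 1) :=
  ((hL _).hasFDerivAt.comp_hasDerivAt S ((hasDerivAt_const S t).prodMk
    ((hasDerivAt_const S x).prodMk ((hasDerivAt_const S v).prodMk (hasDerivAt_id S))))).deriv

theorem fderiv_apply_eq_partials (hL : Differentiable ℝ L) (t x v S dx dv dS : ℝ) :
    fderiv ℝ L (t, x, v, S) (0, dx, dv, dS)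
      = dx * Lx L t x v S + dv * Lv L t x v S + dS * LS L t x v S := by
  have : ((0 : ℝ), dx, dv, dS) = dx • ((0 : ℝ), (1 : ℝ), (0 : ℝ), (0 : ℝ))
      + dv • ((0 : ℝ), (0 : ℝ), (1 : ℝ), (0 : ℝ)) + dS • ((0 : ℝ), (0 : ℝ), (0 : ℝ), (1 : ℝ)) := by
    simp
  rw [this, map_add, map_add, map_smul, map_smul, map_smul, Lx_eq_fderiv hL, Lv_eq_fderiv hL,
    LS_eq_fderiv hL, smul_eq_mul, smul_eq_mul, smul_eq_mul]

theorem contDiff_fderiv_apply_along (hL : ContDiff ℝ 2 L) (hx : ContDiff ℝ 2 x)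
    (hS : ContDiff ℝ 1 S) (e : ℝ × ℝ × ℝ × ℝ) :
    ContDiff ℝ 1 fun t => fderiv ℝ L (t, x t, deriv x t, S t) e := by
  have hpath : ContDiff ℝ 1 fun t => (t, x t, deriv x t, S t) :=
    contDiff_id.prodMk ((hx.of_le (by norm_num)).prodMk
      ((hx.iterate_deriv' 1 1).prodMk hS))
  exact ((hL.fderiv_right (m := 1) (by norm_num)).comp hpath).clm_apply contDiff_const

theorem contDiff_Lx_along (hL : ContDiff ℝ 2 L) (hx : ContDiff ℝ 2 x) (hS : ContDiff ℝ 1 S) :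
    ContDiff ℝ 1 fun t => Lx L t (x t) (deriv x t) (S t) := by
  simpa only [Lx_eq_fderiv (hL.differentiable (by norm_num))] using
    contDiff_fderiv_apply_along hL hx hS _

theorem contDiff_Lv_along (hL : ContDiff ℝ 2 L) (hx : ContDiff ℝ 2 x) (hS : ContDiff ℝ 1 S) :
    ContDiff ℝ 1 fun t => Lv L t (x t) (deriv x t) (S t) := by
  simpa only [Lv_eq_fderiv (hL.differentiable (by norm_num))] using
    contDiff_fderiv_apply_along hL hx hS _

theorem contDiff_LS_along (hL : ContDiff ℝ 2 L) (hx : ContDiff ℝ 2 x) (hS : ContDiff ℝ 1 S) :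
    ContDiff ℝ 1 fun t => LS L t (x t) (deriv x t) (S t) := by
  simpa only [LS_eq_fderiv (hL.differentiable (by norm_num))] using
    contDiff_fderiv_apply_along hL hx hS _

theorem lipschitzOnWith_slice {K : ℝ≥0} {t x v S dx dv : ℝ}
    (hK : ∀ h₁ h₂ : ℝ × ℝ × ℝ × ℝ, ‖h₁‖ ≤ 1 → ‖h₂‖ ≤ 1 →
      ‖L ((t, x, v, S) + h₁) - L ((t, x, v, S) + h₂)‖ ≤ K * ‖h₁ - h₂‖)
    (hdx : |dx| ≤ 1) (hdv : |dv| ≤ 1) :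
    LipschitzOnWith K (fun σ => L (t, x + dx, v + dv, σ)) (Icc (S - 1) (S + 1)) := by
  refine LipschitzOnWith.of_dist_le_mul fun σ₁ hσ₁ σ₂ hσ₂ => ?_
  have hq : ∀ σ, L (t, x + dx, v + dv, σ) = L ((t, x, v, S) + ((0 : ℝ), dx, dv, σ - S)) := by
    simp
  have hnorm : ∀ σ ∈ Icc (S - 1) (S + 1), ‖((0 : ℝ), dx, dv, σ - S)‖ ≤ 1 := fun σ hσ => by
    simp only [Prod.norm_def, norm_zero, Real.norm_eq_abs, max_le_iff, abs_sub_le_iff]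
    exact ⟨zero_le_one, hdx, hdv, by linarith [hσ.2], by linarith [hσ.1]⟩
  rw [hq, hq, dist_eq_norm]
  refine (hK _ _ (hnorm σ₁ hσ₁) (hnorm σ₂ hσ₂)).trans_eq ?_
  simp [Prod.norm_def, Real.dist_eq]

theorem abs_linearization_sub_le {K : ℝ≥0} {q v : ℝ × ℝ × ℝ × ℝ} {M ε : ℝ}
    (hK : ∀ h : ℝ × ℝ × ℝ × ℝ, ‖h‖ ≤ 1 → ‖L (q + h) - L q - fderiv ℝ L q h‖ ≤ K * ‖h‖ ^ 2)
    (hv : ‖v‖ ≤ M) (hε : 0 ≤ ε) (hεM : ε * M ≤ 1) :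
    |L q + ε * fderiv ℝ L q v - L (q + ε • v)| ≤ K * M ^ 2 * ε ^ 2 := by
  have hεv : ‖ε • v‖ ≤ ε * M := by
    rw [norm_smul, Real.norm_of_nonneg hε]
    exact mul_le_mul_of_nonneg_left hv hε
  rw [← abs_neg, ← Real.norm_eq_abs]
  calc _ = ‖L (q + ε • v) - L q - fderiv ℝ L q (ε • v)‖ := by
        rw [map_smul, smul_eq_mul]; ring_nf
    _ ≤ K * ‖ε • v‖ ^ 2 := hK _ (hεv.trans hεM)
    _ ≤ K * (ε * M) ^ 2 := by gcongr
    _ = K * M ^ 2 * ε ^ 2 := by ring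

theorem exists_perturbed_solution (hL : Continuous L) (hab : a ≤ b) (hx : ContDiff ℝ 1 x)
    (hS : Continuous S) (hSeq : IsSolution L a b x S)
    (hη : ContDiff ℝ 1 η)
    (hw : SolvesVariationalEquation L a b x S η w)
    (hwa : w a = 0) {K₁ K₂ : ℝ≥0} {M ε : ℝ}
    (hK₁ : ∀ t ∈ Icc a b, ∀ h₁ h₂ : ℝ × ℝ × ℝ × ℝ, ‖h₁‖ ≤ 1 → ‖h₂‖ ≤ 1 →
      ‖L ((t, x t, deriv x t, S t) + h₁) - L ((t, x t, deriv x t, S t) + h₂)‖ ≤ K₁ * ‖h₁ - h₂‖)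
    (hK₂ : ∀ t ∈ Icc a b, ∀ h : ℝ × ℝ × ℝ × ℝ, ‖h‖ ≤ 1 →
      ‖L ((t, x t, deriv x t, S t) + h) - L (t, x t, deriv x t, S t)
        - fderiv ℝ L (t, x t, deriv x t, S t) h‖ ≤ K₂ * ‖h‖ ^ 2)
    (hM : ∀ t ∈ Icc a b, ‖((0 : ℝ), η t, deriv η t, w t)‖ ≤ M) (hε : 0 < ε)
    (hsmall : ε * M + K₂ * M ^ 2 * gronwallBound 0 K₁ 1 (b - a) * ε ^ 2 ≤ 1) :
    ∃ R : ℝ → ℝ, ContDiff ℝ 1 R ∧ R a = S a ∧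
      (∀ t ∈ Icc a b,
        HasDerivAt R (L (t, x t + ε * η t, deriv x t + ε * deriv η t, R t)) t) ∧
      |R b - (S b + ε * w b)| ≤ K₂ * M ^ 2 * gronwallBound 0 K₁ 1 (b - a) * ε ^ 2 := by
  set p : ℝ → ℝ × ℝ × ℝ × ℝ := fun t => (t, x t, deriv x t, S t)
  set v : ℝ → ℝ × ℝ × ℝ × ℝ := fun t => (0, η t, deriv η t, w t)
  set Γ := gronwallBound 0 K₁ 1 (b - a)
  have hΓ : ∀ t ∈ Icc a b, gronwallBound 0 K₁ 1 (t - a) ≤ Γ := fun t ht =>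
    gronwallBound_mono le_rfl zero_le_one K₁.2 (by linarith [ht.2])
  have hεM : ε * M ≤ 1 := by
    have := hΓ a ⟨le_rfl, hab⟩
    rw [sub_self, gronwallBound_x0] at this
    have : 0 ≤ K₂ * M ^ 2 * Γ * ε ^ 2 := by positivity
    linarith
  have hεbound : ∀ t ∈ Icc a b, |ε * η t| ≤ 1 ∧ |ε * deriv η t| ≤ 1 ∧ |ε * w t| ≤ ε * M := by
    intro t ht
    obtain ⟨h₁, h₂, h₃⟩ : |η t| ≤ M ∧ |deriv η t| ≤ M ∧ |w t| ≤ M := by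
      simpa [v, Prod.norm_def] using hM t ht
    simp only [abs_mul, abs_of_pos hε]
    exact ⟨by nlinarith, by nlinarith, mul_le_mul_of_nonneg_left h₃ hε.le⟩
  set F : ℝ → ℝ → ℝ := fun t σ => L (t, x t + ε * η t, deriv x t + ε * deriv η t, σ)
  have hF : Continuous (uncurry F) := by
    have := hx.continuous; have := hx.continuous_deriv le_rfl
    have := hη.continuous; have := hη.continuous_deriv le_rfl
    exact hL.comp (by fun_prop)
  have hlip : ∀ t ∈ Icc a b, LipschitzOnWith K₁ (F t) (Icc (S t - 1) (S t + 1)) :=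
    fun t ht => lipschitzOnWith_slice (hK₁ t ht) (hεbound t ht).1 (hεbound t ht).2.1
  have happrox : ∀ t ∈ Icc a b,
      |L (p t) + ε * fderiv ℝ L (p t) (v t) - F t (S t + ε * w t)| ≤ K₂ * M ^ 2 * ε ^ 2 := by
    intro t ht
    have hFv : F t (S t + ε * w t) = L (p t + ε • v t) := by simp [F, p, v]
    rw [hFv]
    exact abs_linearization_sub_le (hK₂ t ht) (hM t ht) hε.le hεM
  have hgron : ∀ t ∈ Icc a b,
      gronwallBound 0 K₁ (K₂ * M ^ 2 * ε ^ 2) (t - a) ≤ K₂ * M ^ 2 * Γ * ε ^ 2 := by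
    intro t ht
    rw [gronwallBound_δ0]
    calc _ ≤ K₂ * M ^ 2 * ε ^ 2 * Γ := by gcongr; exact hΓ t ht
      _ = _ := by ring
  obtain ⟨R, hR, hRa, hRF⟩ := exists_solution_near_approx_trajectory hab hF hS hlip
    (fun t ht => (hSeq t ht).fun_add ((hw t ht).const_mul ε)) happrox fun t ht => by
      rw [add_sub_cancel_left]
      linarith [hgron t ht, (hεbound t ht).2.2]
  exact ⟨R, hR, by simp [hRa, hwa], fun t ht => (hRF t ht).1,
    (hRF b ⟨hab, le_rfl⟩).2.trans (hgron b ⟨hab, le_rfl⟩)⟩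

theorem eventually_exists_perturbed_solution (hL : ContDiff ℝ 2 L) (hab : a ≤ b)
    (hx : ContDiff ℝ 1 x) (hS : Continuous S)
    (hSeq : IsSolution L a b x S) (hη : ContDiff ℝ 1 η)
    (hw : SolvesVariationalEquation L a b x S η w)
    (hwa : w a = 0) :
    ∃ C, ∀ᶠ ε in 𝓝[>] 0, ∃ R : ℝ → ℝ, ContDiff ℝ 1 R ∧ R a = S a ∧
      (∀ t ∈ Icc a b,
        HasDerivAt R (L (t, x t + ε * η t, deriv x t + ε * deriv η t, R t)) t) ∧
      |R b - (S b + ε * w b)| ≤ C * ε ^ 2 := by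
  have hwc : ContinuousOn w (Icc a b) := fun t ht => (hw t ht).continuousAt.continuousWithinAt
  obtain ⟨M, hM⟩ := isCompact_Icc.exists_bound_of_continuousOn
    (f := fun t => ((0 : ℝ), η t, deriv η t, w t)) (continuousOn_const.prodMk
      (hη.continuous.continuousOn.prodMk ((hη.continuous_deriv le_rfl).continuousOn.prodMk hwc)))
  have hp : Continuous fun t => (t, x t, deriv x t, S t) := by
    have := hx.continuous; have := hx.continuous_deriv le_rfl; fun_prop
  obtain ⟨K₁, K₂, hK₁, hK₂⟩ := hL.exists_lipschitz_taylor_near_isCompact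
    ((isCompact_Icc (a := a) (b := b)).image hp)
  simp only [forall_mem_image] at hK₁ hK₂
  set C := K₂ * M ^ 2 * gronwallBound 0 K₁ 1 (b - a)
  have hsmall : ∀ᶠ ε in 𝓝[>] (0 : ℝ), ε * M + C * ε ^ 2 < 1 :=
    nhdsWithin_le_nhds <| Tendsto.eventually_lt_const zero_lt_one <| by
      simpa using (by fun_prop : Continuous fun ε : ℝ => ε * M + C * ε ^ 2).tendsto 0
  refine ⟨C, ?_⟩
  filter_upwards [hsmall, self_mem_nhdsWithin] with ε hε (hε₀ : 0 < ε)
  exact exists_perturbed_solution hL.continuous hab hx hS hSeq hη hw hwa hK₁ hK₂ hM hε₀ hε.le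

theorem IsMaximizer.variation_nonpos (hmax : IsMaximizer L a b x S) (hL : ContDiff ℝ 2 L)
    (hab : a ≤ b) (hx : ContDiff ℝ 2 x) (hS : Continuous S) (hSeq : IsSolution L a b x S)
    (hη : ContDiff ℝ 2 η) (hηa : η a = 0) (hηb : η b = 0)
    (hw : SolvesVariationalEquation L a b x S η w)
    (hwa : w a = 0) :
    w b ≤ 0 := by
  obtain ⟨C, hC⟩ := eventually_exists_perturbed_solution hL hab (hx.of_le (by norm_num)) hS hSeq
    (hη.of_le (by norm_num)) hw hwa
  have hle : ∀ᶠ ε in 𝓝[>] 0, w b ≤ C * ε := by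
    filter_upwards [hC, self_mem_nhdsWithin] with ε ⟨R, hR, hRa, hReq, hRb⟩ (hε : 0 < ε)
    have hdy : deriv (fun t => x t + ε * η t) = fun t => deriv x t + ε * deriv η t :=
      funext fun t => ((hx.differentiable (by norm_num) t).hasDerivAt.add
        ((hη.differentiable (by norm_num) t).hasDerivAt.const_mul ε)).deriv
    have hRS := hmax (fun t => x t + ε * η t) (hx.add (contDiff_const.mul hη)) (by simp [hηa])
      (by simp [hηb]) R hR (fun t ht => by simpa only [hdy] using hReq t ht) hRa
    have : ε * w b ≤ ε * (C * ε) := by nlinarith [(abs_le.1 hRb).1]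
    exact le_of_mul_le_mul_left this hε
  exact ge_of_tendsto (by simpa using
    ((continuous_const_mul C).tendsto 0).mono_left nhdsWithin_le_nhds) hle

theorem IsMaximizer.integral_firstVariation_eq_zero (hmax : IsMaximizer L a b x S)
    (hL : ContDiff ℝ 2 L) (hab : a ≤ b) (hx : ContDiff ℝ 2 x) (hS : ContDiff ℝ 1 S)
    (hSeq : IsSolution L a b x S) (hη : ContDiff ℝ 2 η) (hηa : η a = 0) (hηb : η b = 0) :
    ∫ t in a..b, integratingFactor (fun t => LS L t (x t) (deriv x t) (S t)) a t *
      (Lx L t (x t) (deriv x t) (S t) * η t + Lv L t (x t) (deriv x t) (S t) * deriv η t) = 0 := by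
  have hLd : Differentiable ℝ L := hL.differentiable (by norm_num)
  set A := fun t => Lx L t (x t) (deriv x t) (S t)
  set B := fun t => Lv L t (x t) (deriv x t) (S t)
  set C := fun t => LS L t (x t) (deriv x t) (S t)
  have hA : Continuous A := (contDiff_Lx_along hL hx hS).continuous
  have hB : Continuous B := (contDiff_Lv_along hL hx hS).continuous
  have hC : Continuous C := (contDiff_LS_along hL hx hS).continuous
  set I := fun η : ℝ → ℝ => ∫ t in a..b, integratingFactor C a t * (A t * η t + B t * deriv η t)
  -- variation of constants solves the variational equation with `w a = 0`, and at `b` its value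
  -- is `I η` divided by the integrating factor
  have hI : ∀ η : ℝ → ℝ, ContDiff ℝ 2 η → η a = 0 → η b = 0 → I η ≤ 0 := by
    intro η hη hηa hηb
    have hg : Continuous fun t => A t * η t + B t * deriv η t := by
      have := hη.continuous; have := hη.continuous_deriv (by norm_num); fun_prop
    have hw := hmax.variation_nonpos hL hab hx hS.continuous hSeq hη hηa hηb
      (w := variationOfConstants C (fun t => A t * η t + B t * deriv η t) a) (fun t _ => ?_)
      (variationOfConstants_self _ _ a)
    · have hz := integratingFactor_pos C a b
      simp only [variationOfConstants] at hw
      nlinarith [inv_pos.2 hz]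
    · refine (hasDerivAt_variationOfConstants hC hg a t).congr_deriv ?_
      rw [fderiv_apply_eq_partials hLd]
      ring
  have hneg := hI (fun t => -η t) hη.neg (by simp [hηa]) (by simp [hηb])
  simp only [I, deriv.fun_neg, mul_neg, ← neg_add, intervalIntegral.integral_neg] at hneg
  exact le_antisymm (hI η hη hηa hηb) (by linarith)

theorem IsMaximizer.eulerLagrangeResidual_eq_zero (hmax : IsMaximizer L a b x S)
    (hL : ContDiff ℝ 2 L) (hab : a < b) (hx : ContDiff ℝ 2 x) (hS : ContDiff ℝ 1 S)
    (hSeq : IsSolution L a b x S) :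
    EqOn (eulerLagrangeResidual L x S) 0 (Icc a b) := by
  set A := fun t => Lx L t (x t) (deriv x t) (S t)
  set B := fun t => Lv L t (x t) (deriv x t) (S t)
  set C := fun t => LS L t (x t) (deriv x t) (S t)
  have hA : Continuous A := (contDiff_Lx_along hL hx hS).continuous
  have hB : ContDiff ℝ 1 B := contDiff_Lv_along hL hx hS
  have hC : Continuous C := (contDiff_LS_along hL hx hS).continuous
  set z := integratingFactor C a
  have hE : Continuous (eulerLagrangeResidual L x S) :=
    (hA.sub (hB.continuous_deriv le_rfl)).add (hC.mul hB.continuous)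
  have hzE : EqOn (fun t => z t * eulerLagrangeResidual L x S t) 0 (Icc a b) := by
    refine eqOn_zero_of_forall_integral_mul_eq_zero hab
      ((continuous_integratingFactor hC a).mul hE).continuousOn fun g hg _ hgs => ?_
    have hg0 : ∀ t ∉ Ioo a b, g t = 0 := fun t ht =>
      image_eq_zero_of_notMem_tsupport fun h => ht (hgs h)
    have hg1 : ContDiff ℝ 2 g := hg.of_le (mod_cast le_top : ((2 : ℕ∞) : WithTop ℕ∞) ≤ ∞)
    rw [← hmax.integral_firstVariation_eq_zero hL hab.le hx hS hSeq hg1 (hg0 a (by simp))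
      (hg0 b (by simp)), integral_integratingFactor_mul_eq hC hA hB (hg1.of_le (by norm_num))
      (hg0 a (by simp)) (hg0 b (by simp))]
    simp only [eulerLagrangeResidual, A, B, C, z]
    congr 1; ext t; ring
  intro t ht
  exact (mul_eq_zero.1 (hzE ht)).resolve_left (integratingFactor_pos C a t).ne'

end Herglotz

/-- **Generalized Euler–Lagrange equation of Herglotz.** If `x*` maximizes `S(b)` over the
Herglotz variational problem `S' = L(t, x, x', S)`, `S a = s_a`, with fixed endpoints
`x a = x_a`, `x b = x_b`, then along `x*` one has
`∂L/∂x − d/dt (∂L/∂v) + (∂L/∂S)·(∂L/∂v) = 0` on `[a,b]`. -/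
theorem herglotz_generalized_euler_lagrange
    (L : ℝ × ℝ × ℝ × ℝ → ℝ) (hL : ContDiff ℝ 2 L)
    (a b sa xa xb : ℝ) (hab : a < b)
    (xstar : ℝ → ℝ) (hxstar : ContDiff ℝ 2 xstar)
    (hxa : xstar a = xa) (hxb : xstar b = xb)
    (Sstar : ℝ → ℝ) (hSstar : ContDiff ℝ 1 Sstar)
    (hSeq : ∀ t ∈ Set.Icc a b,
      HasDerivAt Sstar (L (t, xstar t, deriv xstar t, Sstar t)) t)
    (hSa : Sstar a = sa)
    (hmax : ∀ x : ℝ → ℝ, ContDiff ℝ 2 x → x a = xa → x b = xb →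
      ∀ S : ℝ → ℝ, ContDiff ℝ 1 S →
        (∀ t ∈ Set.Icc a b, HasDerivAt S (L (t, x t, deriv x t, S t)) t) →
        S a = sa → S b ≤ Sstar b) :
    ∀ t ∈ Set.Icc a b,
      Lx L t (xstar t) (deriv xstar t) (Sstar t)
        - deriv (fun τ => Lv L τ (xstar τ) (deriv xstar τ) (Sstar τ)) t
        + LS L t (xstar t) (deriv xstar t) (Sstar t)
          * Lv L t (xstar t) (deriv xstar t) (Sstar t) = 0 := by
  subst hxa hxb hSa
  exact Herglotz.IsMaximizer.eulerLagrangeResidual_eq_zero hmax hL hab hxstar hSstar hSeq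
end

section
/- Let m > 0, γ ∈ ℝ, let U : ℝ → ℝ be of class C¹, let x : ℝ → ℝ be of class C² satisfying m x''(t) + γ x'(t) + U'(x(t)) = 0 for all t, and let S : ℝ → ℝ be of class C¹ satisfying S'(t) = (m/2)x'(t)² − U(x(t)) − (γ/m)S(t) for all t. Then the function t ↦ ( (m/2)x'(t)² + U(x(t)) + (γ/m)S(t) ) · e^{(γ/m)t} is constant on ℝ; in particular the total energy (m/2)x'² + U(x) + (γ/m)S decays as e^{−(γ/m)t}. -/
/-! Along a solution, the total energy `E = (m/2)x'² + U(x) + (γ/m)S` satisfies `E' = -(γ/m)E`: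
the equation of motion turns `x'(m x'' + U'(x))` into `-γx'²`, and the Herglotz equation for `S`
supplies the rest. Hence `(E · e^{(γ/m)t})' = 0`. -/

open Real

theorem mul_exp_eq_of_hasDerivAt_eq_neg_mul {E : ℝ → ℝ} {c : ℝ}
    (hE : ∀ t, HasDerivAt E (-c * E t) t) (t₁ t₂ : ℝ) :
    E t₁ * exp (c * t₁) = E t₂ * exp (c * t₂) := by
  have hderiv : ∀ t, HasDerivAt (fun t => E t * exp (c * t)) 0 t := by
    intro t
    have hexp : HasDerivAt (fun t => exp (c * t)) (exp (c * t) * c) t :=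
      ((hasDerivAt_id t).const_mul c).exp.congr_deriv (by simp)
    exact ((hE t).mul hexp).congr_deriv (by ring)
  exact is_const_of_deriv_eq_zero (fun t => (hderiv t).differentiableAt)
    (fun t => (hderiv t).deriv) t₁ t₂

/-- `v` stands for `x'`; `(γ/m)S` is the potential energy of the dissipative force. -/
noncomputable def dampedEnergy (m γ : ℝ) (U x v S : ℝ → ℝ) (t : ℝ) : ℝ :=
  m / 2 * v t ^ 2 + U (x t) + γ / m * S t

theorem hasDerivAt_dampedEnergy {m γ : ℝ} (hm : m ≠ 0) {U x v S : ℝ → ℝ} {U' a t : ℝ}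
    (hx : HasDerivAt x (v t) t) (hv : HasDerivAt v a t) (hU : HasDerivAt U U' (x t))
    (hmotion : m * a + γ * v t + U' = 0)
    (hS : HasDerivAt S (m / 2 * v t ^ 2 - U (x t) - γ / m * S t) t) :
    HasDerivAt (dampedEnergy m γ U x v S) (-(γ / m) * dampedEnergy m γ U x v S t) t := by
  have ha : a = -(γ * v t + U') / m := by
    field_simp
    linarith
  refine ((((hv.pow 2).const_mul (m / 2)).add (hU.comp t hx)).add
    (hS.const_mul (γ / m))).congr_deriv ?_
  simp only [dampedEnergy, ha]
  field_simp
  ring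

theorem damped_particle_energy_decay_general
    (m γ : ℝ) (hm : 0 < m)
    (U : ℝ → ℝ) (hU : ContDiff ℝ 1 U)
    (x : ℝ → ℝ) (hx : ContDiff ℝ 2 x)
    (hmotion : ∀ t, m * deriv (deriv x) t + γ * deriv x t + deriv U (x t) = 0)
    (S : ℝ → ℝ)
    (hSeq : ∀ t, HasDerivAt S (m / 2 * (deriv x t) ^ 2 - U (x t) - γ / m * S t) t) :
    ∀ t₁ t₂ : ℝ,
      (m / 2 * (deriv x t₁) ^ 2 + U (x t₁) + γ / m * S t₁) * Real.exp (γ / m * t₁)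
        = (m / 2 * (deriv x t₂) ^ 2 + U (x t₂) + γ / m * S t₂) * Real.exp (γ / m * t₂) := by
  have hxd : Differentiable ℝ x := hx.differentiable (by norm_num)
  have hvd : Differentiable ℝ (deriv x) := hx.differentiable_deriv_two
  have hUd : Differentiable ℝ U := hU.differentiable one_ne_zero
  exact mul_exp_eq_of_hasDerivAt_eq_neg_mul fun t =>
    hasDerivAt_dampedEnergy hm.ne' (hxd t).hasDerivAt (hvd t).hasDerivAt (hUd (x t)).hasDerivAt
      (hmotion t) (hSeq t)

/-- **Exponential energy decay for the damped particle.** If `m x'' + γ x' + U'(x) = 0` and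
`S' = (m/2)x'² − U(x) − (γ/m)S`, then `((m/2)x'² + U(x) + (γ/m)S)·e^{(γ/m)t}` is constant. -/
theorem damped_particle_energy_decay
    (m γ : ℝ) (hm : 0 < m)
    (U : ℝ → ℝ) (hU : ContDiff ℝ 1 U)
    (x : ℝ → ℝ) (hx : ContDiff ℝ 2 x)
    (hmotion : ∀ t, m * deriv (deriv x) t + γ * deriv x t + deriv U (x t) = 0)
    (S : ℝ → ℝ) (hS : ContDiff ℝ 1 S)
    (hSeq : ∀ t, HasDerivAt S (m / 2 * (deriv x t) ^ 2 - U (x t) - γ / m * S t) t) :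
    ∀ t₁ t₂ : ℝ,
      (m / 2 * (deriv x t₁) ^ 2 + U (x t₁) + γ / m * S t₁) * Real.exp (γ / m * t₁)
        = (m / 2 * (deriv x t₂) ^ 2 + U (x t₂) + γ / m * S t₂) * Real.exp (γ / m * t₂) :=
  damped_particle_energy_decay_general m γ hm U hU x hx hmotion S hSeq
end

section
/- Let d ∈ ℕ, let φ : ℝ^d → ℝ and η : ℝ^d → ℝ be of class C¹, and let ξ : ℝ^d → ℝ^d be of class C¹. Suppose there is an open interval I around 0 such that for every ε ∈ I the map Ψ_ε := id + ε ξ is a C¹ diffeomorphism of ℝ^d, and define the transformed field φ̃_ε := (φ + ε η) ∘ Ψ_ε^{-1}. Then for every x ∈ ℝ^d and every index ν ∈ {1,…,d}, the function ε ↦ (∂_ν φ̃_ε)(Ψ_ε(x)) is differentiable at ε = 0 and its derivative at ε = 0 equals ∂_ν η(x) − Σ_{μ=1}^d ∂_μ φ(x) · ∂_ν ξ^μ(x). -/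
/-!
Since `Φ ε` inverts `Ψ_ε = id + ε ξ`, the chain rule gives
`D(φ̃_ε)(Ψ_ε x) = (Dφ x + ε Dη x) ∘ (1 + ε Dξ x)⁻¹`, where the inverse is taken in the normed
algebra of continuous endomorphisms. Inversion is differentiable at `1` with derivative
`t ↦ -t`, so `ε ↦ (1 + ε Dξ x)⁻¹` has derivative `-Dξ x` at `0`, and the product rule yields
`Dη x - Dφ x ∘ Dξ x`; expanding in the standard basis gives the sum over `μ`.
-/

open Function

section

variable {𝕜 : Type*} [NontriviallyNormedField 𝕜]
  {E : Type*} [NormedAddCommGroup E] [NormedSpace 𝕜 E]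
  {F : Type*} [NormedAddCommGroup F] [NormedSpace 𝕜 F]

theorem fderiv_leftInverse_eq_ringInverse {f g : E → E} {x : E}
    (hleft : LeftInverse g f) (hright : RightInverse g f)
    (hf : DifferentiableAt 𝕜 f x) (hg : DifferentiableAt 𝕜 g (f x)) :
    fderiv 𝕜 g (f x) = Ring.inverse (fderiv 𝕜 f x) := by
  have hgf : fderiv 𝕜 g (f x) * fderiv 𝕜 f x = 1 := by
    have hcomp := hg.hasFDerivAt.comp x hf.hasFDerivAt
    rw [hleft.id] at hcomp
    exact hcomp.unique (hasFDerivAt_id x)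
  have hfg : fderiv 𝕜 f x * fderiv 𝕜 g (f x) = 1 := by
    have hf' : HasFDerivAt f (fderiv 𝕜 f x) (g (f x)) := by rw [hleft x]; exact hf.hasFDerivAt
    have hcomp := hf'.comp (f x) hg.hasFDerivAt
    rw [hright.id] at hcomp
    exact hcomp.unique (hasFDerivAt_id (f x))
  exact (Ring.inverse_unit ⟨_, _, hfg, hgf⟩).symm

theorem fderiv_comp_leftInverse_eq_comp_ringInverse {f g : E → E} {h : E → F} {x : E}
    (hleft : LeftInverse g f) (hright : RightInverse g f)
    (hf : DifferentiableAt 𝕜 f x) (hg : DifferentiableAt 𝕜 g (f x))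
    (hh : DifferentiableAt 𝕜 h x) :
    fderiv 𝕜 (h ∘ g) (f x) = (fderiv 𝕜 h x).comp (Ring.inverse (fderiv 𝕜 f x)) := by
  rw [fderiv_comp (f x) (by rwa [hleft x]) hg, hleft x,
    fderiv_leftInverse_eq_ringInverse hleft hright hf hg]

theorem hasFDerivAt_id_add_smul {ξ : E → E} {x : E} (hξ : DifferentiableAt 𝕜 ξ x) (ε : 𝕜) :
    HasFDerivAt (fun y => y + ε • ξ y) (1 + ε • fderiv 𝕜 ξ x) x :=
  (hasFDerivAt_id x).add (hξ.hasFDerivAt.const_smul ε)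

theorem hasDerivAt_ringInverse_one_add_smul {R : Type*} [NormedRing R] [HasSummableGeomSeries R]
    [NormedAlgebra 𝕜 R] (a : R) :
    HasDerivAt (fun t : 𝕜 => Ring.inverse (1 + t • a)) (-a) 0 := by
  have hcurve : HasDerivAt (fun t : 𝕜 => 1 + t • a) a 0 := by
    simpa using ((hasDerivAt_id (0 : 𝕜)).smul_const a).const_add 1
  have hinv := hasFDerivAt_ringInverse (𝕜 := 𝕜) (1 : Rˣ)
  have hstart : 1 + (0 : 𝕜) • a = ((1 : Rˣ) : R) := by simp
  rw [← hstart] at hinv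
  simpa [Function.comp_def] using hinv.comp_hasDerivAt 0 hcurve

theorem hasDerivAt_add_smul_apply_ringInverse_one_add_smul [CompleteSpace E]
    (L M : E →L[𝕜] F) (A : E →L[𝕜] E) (v : E) :
    HasDerivAt (fun t : 𝕜 => (L + t • M) (Ring.inverse (1 + t • A) v)) (M v - L (A v)) 0 := by
  have hcoef : HasDerivAt (fun t : 𝕜 => L + t • M) M 0 := by
    simpa using ((hasDerivAt_id (0 : 𝕜)).smul_const M).const_add L
  have hvec : HasDerivAt (fun t : 𝕜 => Ring.inverse (1 + t • A) v) (-A v) 0 := by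
    simpa using (hasDerivAt_ringInverse_one_add_smul A).clm_apply (hasDerivAt_const 0 v)
  convert hcoef.clm_apply hvec using 1
  simp [sub_eq_add_neg, add_comm]

theorem sum_apply_single_mul_fderiv_apply {ι : Type*} [Fintype ι] [DecidableEq ι]
    (L : (ι → 𝕜) →L[𝕜] 𝕜) {f : E → ι → 𝕜} {x : E} (hf : DifferentiableAt 𝕜 f x) (v : E) :
    ∑ i, L (Pi.single i 1) * fderiv 𝕜 (fun y => f y i) x v = L (fderiv 𝕜 f x v) := by
  conv_rhs => rw [pi_eq_sum_univ' (fderiv 𝕜 f x v), map_sum]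
  simp [fderiv_apply hf, mul_comm]

end

/-- **Infinitesimal transformation law of the field gradient.** Under the one-parameter
family of point transformations `x̃ = x + ε ξ(x)`, `φ̃(x̃) = φ(x) + ε η(x)` (with
`Ψ_ε = id + ε ξ` a `C¹` diffeomorphism with inverse `Φ ε` for `ε` in an open interval
around `0`, and `φ̃_ε = (φ + ε η) ∘ Φ ε`), the map `ε ↦ (∂_ν φ̃_ε)(Ψ_ε x)` is
differentiable at `ε = 0` with derivative `∂_ν η(x) − Σ_μ ∂_μ φ(x) ∂_ν ξ^μ(x)`. -/
theorem gradient_infinitesimal_transformation_law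
    (d : ℕ) (φ η : (Fin d → ℝ) → ℝ) (ξ : (Fin d → ℝ) → (Fin d → ℝ))
    (hφ : ContDiff ℝ 1 φ) (hη : ContDiff ℝ 1 η) (hξ : ContDiff ℝ 1 ξ)
    (ε₁ ε₂ : ℝ) (hε₁ : ε₁ < 0) (hε₂ : 0 < ε₂)
    (Φ : ℝ → (Fin d → ℝ) → (Fin d → ℝ))
    (hdiffeo : ∀ ε ∈ Set.Ioo ε₁ ε₂, ContDiff ℝ 1 (Φ ε)
      ∧ Function.LeftInverse (Φ ε) (fun x => x + ε • ξ x)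
      ∧ Function.RightInverse (Φ ε) (fun x => x + ε • ξ x))
    (x : Fin d → ℝ) (ν : Fin d) :
    HasDerivAt
      (fun ε : ℝ =>
        fderiv ℝ (fun y => φ (Φ ε y) + ε * η (Φ ε y)) (x + ε • ξ x) (Pi.single ν 1))
      (fderiv ℝ η x (Pi.single ν 1)
        - ∑ μ, fderiv ℝ φ x (Pi.single μ 1) * fderiv ℝ (fun y => ξ y μ) x (Pi.single ν 1))
      0 := by
  have hξx : DifferentiableAt ℝ ξ x := hξ.differentiable one_ne_zero x
  rw [sum_apply_single_mul_fderiv_apply (fderiv ℝ φ x) hξx]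
  refine (hasDerivAt_add_smul_apply_ringInverse_one_add_smul (fderiv ℝ φ x) (fderiv ℝ η x)
    (fderiv ℝ ξ x) (Pi.single ν 1)).congr_of_eventuallyEq ?_
  filter_upwards [isOpen_Ioo.mem_nhds ⟨hε₁, hε₂⟩] with ε hε
  obtain ⟨hΦ, hleft, hright⟩ := hdiffeo ε hε
  have hfield : HasFDerivAt (fun y => φ y + ε * η y) (fderiv ℝ φ x + ε • fderiv ℝ η x) x :=
    ((hφ.differentiable one_ne_zero x).hasFDerivAt).add
      (((hη.differentiable one_ne_zero x).hasFDerivAt).const_mul ε)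
  change fderiv ℝ ((fun y => φ y + ε * η y) ∘ Φ ε) (x + ε • ξ x) _ = _
  have hΨ := hasFDerivAt_id_add_smul hξx ε
  rw [fderiv_comp_leftInverse_eq_comp_ringInverse hleft hright hΨ.differentiableAt
    (hΦ.differentiable one_ne_zero _) hfield.differentiableAt, hfield.fderiv, hΨ.fderiv]
  rfl
end

section
/- Assume the Herglotz field setup and let ξ : ℝ^d → ℝ^d and η : ℝ^d → ℝ be of class C¹. Suppose φ satisfies the generalized Euler–Lagrange equation, and suppose the infinitesimal invariance condition holds: for all x, Σ_ν (∂L/∂x^ν)(z(x)) ξ^ν(x) + (∂L/∂u)(z(x)) η(x) + Σ_ν (∂L/∂p_ν)(z(x)) ( ∂_ν η(x) − Σ_μ ∂_μ φ(x) ∂_ν ξ^μ(x) ) + L(z(x)) Σ_ν ∂_ν ξ^ν(x) = 0. Then for all x the Noether identity holds: Σ_ν ∂_ν [ ( (∂L/∂p_ν)(z(·)) η + L(z(·)) ξ^ν − (∂L/∂p_ν)(z(·)) Σ_μ ∂_μ φ · ξ^μ ) e^{−f} ](x) + e^{−f(x)} Σ_ν ( ∂_ν f(x) Σ_μ ∂_μ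 s^μ(x) − Σ_μ ∂_μ f(x) ∂_ν s^μ(x) ) ξ^ν(x) = 0. -/
/-- Partial derivative `∂_ν g` of a scalar field on `ℝ^d`. -/
noncomputable def pd {d : ℕ} (g : (Fin d → ℝ) → ℝ) (ν : Fin d) (x : Fin d → ℝ) : ℝ :=
  fderiv ℝ g x (Pi.single ν 1)

/-- `∂L/∂x^ν` for a Lagrangian `L(x, u, p, s)` on `ℝ^d × ℝ × ℝ^d × ℝ^d`. -/
noncomputable def pLx {d : ℕ} (L : (Fin d → ℝ) × ℝ × (Fin d → ℝ) × (Fin d → ℝ) → ℝ)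
    (ν : Fin d) (z : (Fin d → ℝ) × ℝ × (Fin d → ℝ) × (Fin d → ℝ)) : ℝ :=
  fderiv ℝ (fun y => L (y, z.2.1, z.2.2.1, z.2.2.2)) z.1 (Pi.single ν 1)

/-- `∂L/∂u` for a Lagrangian `L(x, u, p, s)`. -/
noncomputable def pLu {d : ℕ} (L : (Fin d → ℝ) × ℝ × (Fin d → ℝ) × (Fin d → ℝ) → ℝ)
    (z : (Fin d → ℝ) × ℝ × (Fin d → ℝ) × (Fin d → ℝ)) : ℝ :=
  deriv (fun w => L (z.1, w, z.2.2.1, z.2.2.2)) z.2.1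

/-- `∂L/∂p_ν` for a Lagrangian `L(x, u, p, s)`. -/
noncomputable def pLp {d : ℕ} (L : (Fin d → ℝ) × ℝ × (Fin d → ℝ) × (Fin d → ℝ) → ℝ)
    (ν : Fin d) (z : (Fin d → ℝ) × ℝ × (Fin d → ℝ) × (Fin d → ℝ)) : ℝ :=
  fderiv ℝ (fun q => L (z.1, z.2.1, q, z.2.2.2)) z.2.2.1 (Pi.single ν 1)

/-- `∂L/∂s_ν` for a Lagrangian `L(x, u, p, s)`. -/
noncomputable def pLs {d : ℕ} (L : (Fin d → ℝ) × ℝ × (Fin d → ℝ) × (Fin d → ℝ) → ℝ)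
    (ν : Fin d) (z : (Fin d → ℝ) × ℝ × (Fin d → ℝ) × (Fin d → ℝ)) : ℝ :=
  fderiv ℝ (fun w => L (z.1, z.2.1, z.2.2.1, w)) z.2.2.2 (Pi.single ν 1)

/-!
Expanding the divergence of the unweighted Noether current
`J^ν = L_{p_ν} (η - ∇φ·ξ) + L ξ^ν` by the product and chain rules, the second derivatives of `φ`
cancel by symmetry of the Hessian, and what is left is the invariance expression, plus
`(η - ∇φ·ξ)` times the classical Euler–Lagrange expression `Σ_ν ∂_ν L_{p_ν} - L_u`, plus the
contribution `Σ_{ν,μ} ∂_ν s^μ L_{s_μ} ξ^ν` of the `s`-dependence of `L`. The weight `e^{-f}`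
contributes `-e^{-f} Σ_ν J^ν ∂_ν f`. By the gradient condition `L_{s_μ} = ∂_μ f`, the generalized
Euler–Lagrange equation cancels the `(η - ∇φ·ξ)`-terms, and the Herglotz equation `div s = L`
turns the rest into the negative of the source term.
-/

section PartialDerivative

variable {d : ℕ} {g h : (Fin d → ℝ) → ℝ} {ν : Fin d} {x : Fin d → ℝ}

lemma HasFDerivAt.pd_eq {g' : (Fin d → ℝ) →L[ℝ] ℝ} (hg : HasFDerivAt g g' x) :
    pd g ν x = g' (Pi.single ν 1) := by
  rw [pd, hg.fderiv]

lemma pd_add (hg : DifferentiableAt ℝ g x) (hh : DifferentiableAt ℝ h x) :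
    pd (fun y => g y + h y) ν x = pd g ν x + pd h ν x := by
  simp [pd, fderiv_fun_add hg hh]

lemma pd_sub (hg : DifferentiableAt ℝ g x) (hh : DifferentiableAt ℝ h x) :
    pd (fun y => g y - h y) ν x = pd g ν x - pd h ν x := by
  simp [pd, fderiv_fun_sub hg hh]

lemma pd_mul (hg : DifferentiableAt ℝ g x) (hh : DifferentiableAt ℝ h x) :
    pd (fun y => g y * h y) ν x = pd g ν x * h x + g x * pd h ν x := by
  simp only [pd, fderiv_fun_mul hg hh, add_apply, smul_apply, smul_eq_mul]
  ring

lemma pd_sum {ι : Type*} (t : Finset ι) {g : ι → (Fin d → ℝ) → ℝ}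
    (hg : ∀ i ∈ t, DifferentiableAt ℝ (g i) x) :
    pd (fun y => ∑ i ∈ t, g i y) ν x = ∑ i ∈ t, pd (g i) ν x := by
  simp [pd, fderiv_fun_sum hg]

lemma pd_exp_neg (hg : DifferentiableAt ℝ g x) :
    pd (fun y => Real.exp (-g y)) ν x = -(Real.exp (-g x) * pd g ν x) := by
  rw [pd, fderiv_exp hg.fun_neg, fderiv_fun_neg]
  simp [pd]

lemma pd_mul_exp_neg {f : (Fin d → ℝ) → ℝ}
    (hg : DifferentiableAt ℝ g x) (hf : DifferentiableAt ℝ f x) :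
    pd (fun y => g y * Real.exp (-f y)) ν x = (pd g ν x - g x * pd f ν x) * Real.exp (-f x) := by
  rw [pd_mul hg hf.fun_neg.exp, pd_exp_neg hf]
  ring

lemma pd_apply {G : (Fin d → ℝ) → Fin d → ℝ} (hG : DifferentiableAt ℝ G x) (μ : Fin d) :
    pd (fun y => G y μ) ν x = fderiv ℝ G x (Pi.single ν 1) μ := by
  simp [pd, fderiv_apply hG]

lemma pd_pd_eq_fderiv_fderiv (hg : ContDiff ℝ 2 g) (μ : Fin d) :
    pd (fun y => pd g μ y) ν x = fderiv ℝ (fderiv ℝ g) x (Pi.single ν 1) (Pi.single μ 1) := by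
  have hdg : Differentiable ℝ (fderiv ℝ g) := (hg.fderiv_right le_rfl).differentiable one_ne_zero
  simp [pd, fderiv_clm_apply (hdg x) (differentiableAt_const _)]

lemma pd_pd_comm (hg : ContDiff ℝ 2 g) (μ ν : Fin d) :
    pd (fun y => pd g μ y) ν x = pd (fun y => pd g ν y) μ x := by
  rw [pd_pd_eq_fderiv_fderiv hg, pd_pd_eq_fderiv_fderiv hg]
  exact hg.contDiffAt.isSymmSndFDerivAt (by simp) _ _

lemma differentiable_pd (hg : ContDiff ℝ 2 g) (μ : Fin d) :
    Differentiable ℝ (fun y => pd g μ y) :=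
  ((hg.fderiv_right le_rfl).differentiable one_ne_zero).clm_apply (differentiable_const _)

end PartialDerivative

section Lagrangian

variable {d : ℕ} {L : (Fin d → ℝ) × ℝ × (Fin d → ℝ) × (Fin d → ℝ) → ℝ}
  {w : (Fin d → ℝ) × ℝ × (Fin d → ℝ) × (Fin d → ℝ)}

lemma pLx_eq_fderiv_apply (hL : DifferentiableAt ℝ L w) (ν : Fin d) :
    pLx L ν w = fderiv ℝ L w (Pi.single ν 1, 0, 0, 0) := by
  have h := hL.hasFDerivAt.comp w.1 (hasFDerivAt_prodMk_left (𝕜 := ℝ) w.1 w.2)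
  exact congrArg (· (Pi.single ν 1)) h.fderiv

lemma pLu_eq_fderiv_apply (hL : DifferentiableAt ℝ L w) :
    pLu L w = fderiv ℝ L w (0, 1, 0, 0) := by
  have h := hL.hasFDerivAt.comp w.2.1 ((hasFDerivAt_prodMk_right (𝕜 := ℝ) w.1 w.2).comp w.2.1
    (hasFDerivAt_prodMk_left (𝕜 := ℝ) w.2.1 w.2.2))
  exact h.hasDerivAt.deriv

lemma pLp_eq_fderiv_apply (hL : DifferentiableAt ℝ L w) (ν : Fin d) :
    pLp L ν w = fderiv ℝ L w (0, 0, Pi.single ν 1, 0) := by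
  have h := hL.hasFDerivAt.comp w.2.2.1 ((hasFDerivAt_prodMk_right (𝕜 := ℝ) w.1 w.2).comp w.2.2.1
    ((hasFDerivAt_prodMk_right (𝕜 := ℝ) w.2.1 w.2.2).comp w.2.2.1
      (hasFDerivAt_prodMk_left (𝕜 := ℝ) w.2.2.1 w.2.2.2)))
  exact congrArg (· (Pi.single ν 1)) h.fderiv

lemma pLs_eq_fderiv_apply (hL : DifferentiableAt ℝ L w) (ν : Fin d) :
    pLs L ν w = fderiv ℝ L w (0, 0, 0, Pi.single ν 1) := by
  have h := hL.hasFDerivAt.comp w.2.2.2 ((hasFDerivAt_prodMk_right (𝕜 := ℝ) w.1 w.2).comp w.2.2.2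
    ((hasFDerivAt_prodMk_right (𝕜 := ℝ) w.2.1 w.2.2).comp w.2.2.2
      (hasFDerivAt_prodMk_right (𝕜 := ℝ) w.2.2.1 w.2.2.2)))
  exact congrArg (· (Pi.single ν 1)) h.fderiv

lemma fderiv_apply_eq_sum_partials (hL : DifferentiableAt ℝ L w) (a : Fin d → ℝ) (b : ℝ)
    (c e : Fin d → ℝ) :
    fderiv ℝ L w (a, b, c, e) = ∑ ν, a ν * pLx L ν w + b * pLu L w
      + ∑ ν, c ν * pLp L ν w + ∑ ν, e ν * pLs L ν w := by
  have hsplit : ((a, b, c, e) : (Fin d → ℝ) × ℝ × (Fin d → ℝ) × (Fin d → ℝ)) =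
      ∑ ν, a ν • (Pi.single ν 1, 0, 0, 0) + b • (0, 1, 0, 0)
        + ∑ ν, c ν • (0, 0, Pi.single ν 1, 0) + ∑ ν, e ν • (0, 0, 0, Pi.single ν 1) := by
    ext <;> simp [Prod.fst_sum, Prod.snd_sum, Pi.single_apply]
  simp only [hsplit, map_add, map_sum, map_smul, smul_eq_mul, pLx_eq_fderiv_apply hL,
    pLu_eq_fderiv_apply hL, pLp_eq_fderiv_apply hL, pLs_eq_fderiv_apply hL]

lemma pd_comp_prod {u : (Fin d → ℝ) → ℝ} {p s : (Fin d → ℝ) → Fin d → ℝ} {x : Fin d → ℝ}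
    (hL : DifferentiableAt ℝ L (x, u x, p x, s x)) (hu : DifferentiableAt ℝ u x)
    (hp : DifferentiableAt ℝ p x) (hs : DifferentiableAt ℝ s x) (ν : Fin d) :
    pd (fun y => L (y, u y, p y, s y)) ν x = pLx L ν (x, u x, p x, s x)
      + pd u ν x * pLu L (x, u x, p x, s x)
      + ∑ μ, pd (fun y => p y μ) ν x * pLp L μ (x, u x, p x, s x)
      + ∑ μ, pd (fun y => s y μ) ν x * pLs L μ (x, u x, p x, s x) := by
  have h : HasFDerivAt (fun y => L (y, u y, p y, s y)) _ x :=
    hL.hasFDerivAt.comp x ((hasFDerivAt_id x).prodMk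
      (hu.hasFDerivAt.prodMk (hp.hasFDerivAt.prodMk hs.hasFDerivAt)))
  simp only [h.pd_eq, pd_apply hp, pd_apply hs]
  simp [fderiv_apply_eq_sum_partials hL, pd, Pi.single_apply]

end Lagrangian

lemma sum_mul_sum_comm_of_symm {d : ℕ} {H : Fin d → Fin d → ℝ} (hH : ∀ μ ν, H μ ν = H ν μ)
    (a b : Fin d → ℝ) :
    ∑ ν, a ν * ∑ μ, H μ ν * b μ = ∑ ν, b ν * ∑ μ, H μ ν * a μ := by
  simp only [Finset.mul_sum]
  rw [Finset.sum_comm]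
  exact Fintype.sum_congr _ _ fun ν => Fintype.sum_congr _ _ fun μ => by rw [hH]; ring

section Noether

variable {d : ℕ} {L : (Fin d → ℝ) × ℝ × (Fin d → ℝ) × (Fin d → ℝ) → ℝ} {φ : (Fin d → ℝ) → ℝ}
  {s ξ : (Fin d → ℝ) → Fin d → ℝ} {η : (Fin d → ℝ) → ℝ}
  {z : (Fin d → ℝ) → (Fin d → ℝ) × ℝ × (Fin d → ℝ) × (Fin d → ℝ)}

lemma differentiable_jet (hφ : ContDiff ℝ 2 φ) (hs : Differentiable ℝ s)
    (hz : z = fun x => (x, φ x, fun ν => pd φ ν x, s x)) : Differentiable ℝ z := by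
  subst hz
  exact differentiable_id.prodMk ((hφ.differentiable two_ne_zero).prodMk
    ((differentiable_pi.2 (differentiable_pd hφ)).prodMk hs))

lemma differentiable_sum_pd_mul (hφ : ContDiff ℝ 2 φ) (hξ : Differentiable ℝ ξ) :
    Differentiable ℝ (fun y => ∑ μ, pd φ μ y * ξ y μ) :=
  Differentiable.fun_sum fun μ _ => (differentiable_pd hφ μ).fun_mul (differentiable_pi.1 hξ μ)

lemma differentiable_noether_current (hL : Differentiable ℝ L) (hφ : ContDiff ℝ 2 φ)
    (hs : Differentiable ℝ s) (hz : z = fun x => (x, φ x, fun ν => pd φ ν x, s x))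
    (hP : ∀ ν, Differentiable ℝ (fun x => pLp L ν (z x)))
    (hξ : Differentiable ℝ ξ) (hη : Differentiable ℝ η) (ν : Fin d) :
    Differentiable ℝ (fun y => pLp L ν (z y) * η y + L (z y) * ξ y ν
        - pLp L ν (z y) * ∑ μ, pd φ μ y * ξ y μ) :=
  (((hP ν).fun_mul hη).fun_add ((hL.comp (differentiable_jet hφ hs hz)).fun_mul
    (differentiable_pi.1 hξ ν))).fun_sub ((hP ν).fun_mul (differentiable_sum_pd_mul hφ hξ))

lemma pd_noether_current (hL : Differentiable ℝ L) (hφ : ContDiff ℝ 2 φ) (hs : Differentiable ℝ s)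
    (hz : z = fun x => (x, φ x, fun ν => pd φ ν x, s x))
    (hP : ∀ ν, Differentiable ℝ (fun x => pLp L ν (z x)))
    (hξ : Differentiable ℝ ξ) (hη : Differentiable ℝ η) (x : Fin d → ℝ) (ν : Fin d) :
    pd (fun y => pLp L ν (z y) * η y + L (z y) * ξ y ν
        - pLp L ν (z y) * ∑ μ, pd φ μ y * ξ y μ) ν x
      = pLx L ν (z x) * ξ x ν
        + pLp L ν (z x) * (pd η ν x - ∑ μ, pd φ μ x * pd (fun y => ξ y μ) ν x)
        + L (z x) * pd (fun y => ξ y ν) ν x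
        + pd (fun y => pLp L ν (z y)) ν x * (η x - ∑ μ, pd φ μ x * ξ x μ)
        + pLu L (z x) * (pd φ ν x * ξ x ν)
        + (∑ μ, pd (fun y => s y μ) ν x * pLs L μ (z x)) * ξ x ν
        + (ξ x ν * ∑ μ, pd (fun y => pd φ μ y) ν x * pLp L μ (z x)
          - pLp L ν (z x) * ∑ μ, pd (fun y => pd φ μ y) ν x * ξ x μ) := by
  have hΛ : Differentiable ℝ (fun y => L (z y)) := hL.comp (differentiable_jet hφ hs hz)
  have hW := differentiable_sum_pd_mul hφ hξ
  have hdφ := differentiable_pd hφ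
  have hξμ : ∀ μ, Differentiable ℝ (fun y => ξ y μ) := differentiable_pi.1 hξ
  subst hz
  beta_reduce at hP hΛ ⊢
  rw [pd_sub (((hP ν).fun_mul hη).fun_add (hΛ.fun_mul (hξμ ν)) x) ((hP ν).fun_mul hW x),
    pd_add ((hP ν).fun_mul hη x) (hΛ.fun_mul (hξμ ν) x), pd_mul (hP ν x) (hη x),
    pd_mul (hΛ x) (hξμ ν x), pd_mul (hP ν x) (hW x),
    pd_comp_prod (hL _) (hφ.differentiable two_ne_zero x) (differentiable_pi.2 hdφ x) (hs x),
    pd_sum _ fun μ _ => (hdφ μ).fun_mul (hξμ μ) x]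
  simp only [pd_mul (hdφ _ x) (hξμ _ x), Finset.sum_add_distrib]
  ring

lemma sum_pd_noether_current (hL : Differentiable ℝ L) (hφ : ContDiff ℝ 2 φ)
    (hs : Differentiable ℝ s) (hz : z = fun x => (x, φ x, fun ν => pd φ ν x, s x))
    (hP : ∀ ν, Differentiable ℝ (fun x => pLp L ν (z x)))
    (hξ : Differentiable ℝ ξ) (hη : Differentiable ℝ η) (x : Fin d → ℝ) :
    ∑ ν, pd (fun y => pLp L ν (z y) * η y + L (z y) * ξ y ν
        - pLp L ν (z y) * ∑ μ, pd φ μ y * ξ y μ) ν x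
      = ((∑ ν, pLx L ν (z x) * ξ x ν) + pLu L (z x) * η x
          + (∑ ν, pLp L ν (z x) * (pd η ν x - ∑ μ, pd φ μ x * pd (fun y => ξ y μ) ν x))
          + L (z x) * (∑ ν, pd (fun y => ξ y ν) ν x))
        + (η x - ∑ μ, pd φ μ x * ξ x μ) * (∑ ν, pd (fun y => pLp L ν (z y)) ν x - pLu L (z x))
        + ∑ ν, (∑ μ, pd (fun y => s y μ) ν x * pLs L μ (z x)) * ξ x ν := by
  have hhess := sum_mul_sum_comm_of_symm (fun μ ν => pd_pd_comm hφ (x := x) μ ν)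
    (ξ x) (fun μ => pLp L μ (z x))
  simp only [pd_noether_current hL hφ hs hz hP hξ hη, Finset.sum_add_distrib, Finset.sum_sub_distrib,
    ← Finset.mul_sum, ← Finset.sum_mul, hhess, sub_self]
  ring

end Noether

/-- **The Noether identity for the Herglotz field problem.** Under the Herglotz field
setup, if `φ` satisfies the generalized Euler–Lagrange equation and the infinitesimal
invariance condition holds, then
`Σ_ν ∂_ν [(L_{p_ν} η + L ξ^ν − L_{p_ν} Σ_μ ∂_μφ ξ^μ) e^{−f}]
  + e^{−f} Σ_ν (∂_ν f Σ_μ ∂_μ s^μ − Σ_μ ∂_μ f ∂_ν s^μ) ξ^ν = 0`. -/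
theorem herglotz_noether_identity
    (d : ℕ) (L : (Fin d → ℝ) × ℝ × (Fin d → ℝ) × (Fin d → ℝ) → ℝ)
    (hL : ContDiff ℝ 1 L)
    (φ : (Fin d → ℝ) → ℝ) (hφ : ContDiff ℝ 2 φ)
    (s : (Fin d → ℝ) → (Fin d → ℝ)) (hs : ContDiff ℝ 1 s)
    (f : (Fin d → ℝ) → ℝ) (hf : ContDiff ℝ 1 f)
    (z : (Fin d → ℝ) → (Fin d → ℝ) × ℝ × (Fin d → ℝ) × (Fin d → ℝ))
    (hz : z = fun x => (x, φ x, fun ν => pd φ ν x, s x))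
    (herglotz : ∀ x, (∑ ν, pd (fun y => s y ν) ν x) = L (z x))
    (hgrad : ∀ (ν : Fin d) (x : Fin d → ℝ), pLs L ν (z x) = pd f ν x)
    (hdiff : ∀ ν : Fin d, Differentiable ℝ (fun x => pLp L ν (z x)))
    (hEL : ∀ x, pLu L (z x) - (∑ ν, pd (fun y => pLp L ν (z y)) ν x)
      + (∑ ν, pd f ν x * pLp L ν (z x)) = 0)
    (ξ : (Fin d → ℝ) → (Fin d → ℝ)) (hξ : ContDiff ℝ 1 ξ)
    (η : (Fin d → ℝ) → ℝ) (hη : ContDiff ℝ 1 η)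
    (hinv : ∀ x, (∑ ν, pLx L ν (z x) * ξ x ν) + pLu L (z x) * η x
      + (∑ ν, pLp L ν (z x) * (pd η ν x - ∑ μ, pd φ μ x * pd (fun y => ξ y μ) ν x))
      + L (z x) * (∑ ν, pd (fun y => ξ y ν) ν x) = 0) :
    ∀ x, (∑ ν, pd (fun y =>
        (pLp L ν (z y) * η y + L (z y) * ξ y ν
          - pLp L ν (z y) * (∑ μ, pd φ μ y * ξ y μ)) * Real.exp (-f y)) ν x)
      + Real.exp (-f x) * (∑ ν, (pd f ν x * (∑ μ, pd (fun y => s y μ) μ x)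
          - ∑ μ, pd f μ x * pd (fun y => s y μ) ν x) * ξ x ν) = 0 := by
  intro x
  have hL₁ := hL.differentiable one_ne_zero
  have hs₁ := hs.differentiable one_ne_zero
  have hξ₁ := hξ.differentiable one_ne_zero
  have hη₁ := hη.differentiable one_ne_zero
  have hJ := differentiable_noether_current hL₁ hφ hs₁ hz hdiff hξ₁ hη₁
  simp only [pd_mul_exp_neg (hJ _ x) (hf.differentiable one_ne_zero x), ← Finset.sum_mul,
    Finset.sum_sub_distrib]
  rw [sum_pd_noether_current hL₁ hφ hs₁ hz hdiff hξ₁ hη₁, hinv x, herglotz x]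
  simp only [hgrad]
  have hflux : ∑ ν, (pLp L ν (z x) * η x + L (z x) * ξ x ν
        - pLp L ν (z x) * ∑ μ, pd φ μ x * ξ x μ) * pd f ν x
      = (η x - ∑ μ, pd φ μ x * ξ x μ) * (∑ ν, pd f ν x * pLp L ν (z x))
        + L (z x) * ∑ ν, pd f ν x * ξ x ν := by
    rw [Finset.mul_sum, Finset.mul_sum, ← Finset.sum_add_distrib]
    exact Fintype.sum_congr _ _ fun ν => by ring
  have hsource : ∑ ν, (pd f ν x * L (z x) - ∑ μ, pd f μ x * pd (fun y => s y μ) ν x) * ξ x ν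
      = L (z x) * (∑ ν, pd f ν x * ξ x ν)
        - ∑ ν, (∑ μ, pd (fun y => s y μ) ν x * pd f μ x) * ξ x ν := by
    rw [Finset.mul_sum, ← Finset.sum_sub_distrib]
    exact Fintype.sum_congr _ _ fun ν => by simp only [mul_comm (pd f _ x)]; ring
  rw [hflux, hsource]
  linear_combination Real.exp (-f x) * (∑ μ, pd φ μ x * ξ x μ - η x) * hEL x
end

section
/- Let μ > 0 and T, γ ∈ ℝ. Let φ : ℝ² → ℝ (coordinates (t,x)) be of class C² and satisfy the damped wave equation μ ∂_{tt}φ − T ∂_{xx}φ + γ ∂_tφ = 0 on ℝ². Let s¹ : ℝ² → ℝ be of class C¹ and satisfy ∂_t s¹(t,x) = (μ/2)(∂_tφ)² − (T/2)(∂_xφ)² − (γ/μ)s¹(t,x). Then the local energy conservation law holds at every point: ∂_t[ ( (μ/2)(∂_tφ)² + (T/2)(∂_xφ)² + (γ/μ)s¹ ) e^{(γ/μ)t} ] − ∂_x[ T (∂_xφ)(∂_tφ) e^{(γ/μ)t} ] = 0. -/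
/-- Partial derivative `∂_t g` of a function on the `(t,x)` plane. -/
noncomputable def ptd (g : ℝ × ℝ → ℝ) (p : ℝ × ℝ) : ℝ :=
  deriv (fun τ => g (τ, p.2)) p.1

/-- Partial derivative `∂_x g` of a function on the `(t,x)` plane. -/
noncomputable def pxd (g : ℝ × ℝ → ℝ) (p : ℝ × ℝ) : ℝ :=
  deriv (fun y => g (p.1, y)) p.2

/-!
Differentiating the weighted energy density gives, besides the undamped terms
`μ φ_t φ_tt + T φ_x φ_xt`, the factor `γ/μ` times `∂_t s¹` plus the energy density itself; by the
Herglotz equation for `∂_t s¹` this is exactly `γ (∂_tφ)²`, so `s¹` drops out. Once the mixed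
partials of `φ` are identified (Schwarz), subtracting the flux derivative leaves `e^{(γ/μ)t} ∂_tφ`
times the damped wave equation.
-/

open Real

section PartialDerivatives

variable {g : ℝ × ℝ → ℝ} {p : ℝ × ℝ}

theorem hasDerivAt_ptd_fderiv (hg : DifferentiableAt ℝ g p) :
    HasDerivAt (fun τ => g (τ, p.2)) (fderiv ℝ g p (1, 0)) p.1 := by
  have hline : HasDerivAt (fun τ : ℝ => (τ, p.2)) ((1 : ℝ), (0 : ℝ)) p.1 :=
    (hasDerivAt_id p.1).prodMk (hasDerivAt_const p.1 p.2)
  exact hg.hasFDerivAt.comp_hasDerivAt p.1 hline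

theorem hasDerivAt_pxd_fderiv (hg : DifferentiableAt ℝ g p) :
    HasDerivAt (fun y => g (p.1, y)) (fderiv ℝ g p (0, 1)) p.2 := by
  have hline : HasDerivAt (fun y : ℝ => (p.1, y)) ((0 : ℝ), (1 : ℝ)) p.2 :=
    (hasDerivAt_const p.2 p.1).prodMk (hasDerivAt_id p.2)
  exact hg.hasFDerivAt.comp_hasDerivAt p.2 hline

theorem ptd_eq_fderiv (hg : DifferentiableAt ℝ g p) : ptd g p = fderiv ℝ g p (1, 0) :=
  (hasDerivAt_ptd_fderiv hg).deriv

theorem pxd_eq_fderiv (hg : DifferentiableAt ℝ g p) : pxd g p = fderiv ℝ g p (0, 1) :=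
  (hasDerivAt_pxd_fderiv hg).deriv

theorem hasDerivAt_ptd (hg : DifferentiableAt ℝ g p) :
    HasDerivAt (fun τ => g (τ, p.2)) (ptd g p) p.1 :=
  ptd_eq_fderiv hg ▸ hasDerivAt_ptd_fderiv hg

theorem hasDerivAt_pxd (hg : DifferentiableAt ℝ g p) :
    HasDerivAt (fun y => g (p.1, y)) (pxd g p) p.2 :=
  pxd_eq_fderiv hg ▸ hasDerivAt_pxd_fderiv hg

theorem ptd_mul_exp (a : ℝ) (hg : DifferentiableAt ℝ g p) :
    ptd (fun q => g q * exp (a * q.1)) p = (ptd g p + a * g p) * exp (a * p.1) := by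
  have hexp : HasDerivAt (fun τ => exp (a * τ)) (exp (a * p.1) * a) p.1 := by
    simpa using ((hasDerivAt_id p.1).const_mul a).exp
  exact ((hasDerivAt_ptd hg).mul hexp).deriv.trans (by ring)

theorem pxd_mul_exp (a : ℝ) :
    pxd (fun q => g q * exp (a * q.1)) p = pxd g p * exp (a * p.1) :=
  show deriv (fun y => g (p.1, y) * exp (a * p.1)) p.2 = _ from deriv_mul_const_field _

end PartialDerivatives

section Smoothness

variable {g : ℝ × ℝ → ℝ}

theorem ptd_eq_fderiv_apply (hg : Differentiable ℝ g) : ptd g = fun q => fderiv ℝ g q (1, 0) :=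
  funext fun q => ptd_eq_fderiv (hg q)

theorem pxd_eq_fderiv_apply (hg : Differentiable ℝ g) : pxd g = fun q => fderiv ℝ g q (0, 1) :=
  funext fun q => pxd_eq_fderiv (hg q)

theorem ContDiff.ptd {n : WithTop ℕ∞} (hg : ContDiff ℝ (n + 1) g) : ContDiff ℝ n (ptd g) := by
  rw [ptd_eq_fderiv_apply (hg.differentiable (by simp))]
  exact (hg.fderiv_right le_rfl).clm_apply contDiff_const

theorem ContDiff.pxd {n : WithTop ℕ∞} (hg : ContDiff ℝ (n + 1) g) : ContDiff ℝ n (pxd g) := by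
  rw [pxd_eq_fderiv_apply (hg.differentiable (by simp))]
  exact (hg.fderiv_right le_rfl).clm_apply contDiff_const

theorem fderiv_fderiv_apply_const {p w : ℝ × ℝ} (hg : DifferentiableAt ℝ (fderiv ℝ g) p) :
    fderiv ℝ (fun q => fderiv ℝ g q w) p = (fderiv ℝ (fderiv ℝ g) p).flip w := by
  rw [fderiv_clm_apply hg (differentiableAt_const w)]
  simp

theorem ptd_pxd_comm (hg : ContDiff ℝ 2 g) (p : ℝ × ℝ) : ptd (pxd g) p = pxd (ptd g) p := by
  have hg' : Differentiable ℝ g := hg.differentiable (by norm_num)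
  have hdg : DifferentiableAt ℝ (fderiv ℝ g) p :=
    (hg.fderiv_right (m := 1) le_rfl).differentiable one_ne_zero p
  rw [ptd_eq_fderiv ((hg.pxd (n := 1)).differentiable one_ne_zero p),
    pxd_eq_fderiv ((hg.ptd (n := 1)).differentiable one_ne_zero p),
    pxd_eq_fderiv_apply hg', ptd_eq_fderiv_apply hg',
    fderiv_fderiv_apply_const hdg, fderiv_fderiv_apply_const hdg]
  exact (hg.contDiffAt.isSymmSndFDerivAt (by simp)) _ _

end Smoothness
section EnergyBalance

variable {u v s : ℝ × ℝ → ℝ} {p : ℝ × ℝ}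

theorem ptd_energy_density (μ T a : ℝ) (hu : DifferentiableAt ℝ u p)
    (hv : DifferentiableAt ℝ v p) (hs : DifferentiableAt ℝ s p) :
    ptd (fun q => μ / 2 * u q ^ 2 + T / 2 * v q ^ 2 + a * s q) p
      = μ * u p * ptd u p + T * v p * ptd v p + a * ptd s p :=
  ((((hasDerivAt_ptd hu).pow 2).const_mul (μ / 2)).add
    (((hasDerivAt_ptd hv).pow 2).const_mul (T / 2)) |>.add
    ((hasDerivAt_ptd hs).const_mul a)).deriv.trans (by ring)

theorem pxd_const_mul_mul (c : ℝ) (hv : DifferentiableAt ℝ v p) (hu : DifferentiableAt ℝ u p) :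
    pxd (fun q => c * v q * u q) p = c * (pxd v p * u p + v p * pxd u p) :=
  (((hasDerivAt_pxd hv).const_mul c).mul (hasDerivAt_pxd hu)).deriv.trans (by ring)

end EnergyBalance

/-- **Local energy conservation for the damped vibrating string.** If
`μ ∂_{tt}φ − T ∂_{xx}φ + γ ∂_tφ = 0` and `∂_t s¹ = (μ/2)(∂_tφ)² − (T/2)(∂_xφ)² − (γ/μ)s¹`,
then at every point
`∂_t[((μ/2)(∂_tφ)² + (T/2)(∂_xφ)² + (γ/μ)s¹)e^{(γ/μ)t}] − ∂_x[T(∂_xφ)(∂_tφ)e^{(γ/μ)t}] = 0`. -/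
theorem vibrating_string_local_energy_conservation
    (μ T γ : ℝ) (hμ : 0 < μ)
    (φ : ℝ × ℝ → ℝ) (hφ : ContDiff ℝ 2 φ)
    (hwave : ∀ p : ℝ × ℝ, μ * ptd (ptd φ) p - T * pxd (pxd φ) p + γ * ptd φ p = 0)
    (s1 : ℝ × ℝ → ℝ) (hs1 : ContDiff ℝ 1 s1)
    (hs1eq : ∀ p : ℝ × ℝ,
      ptd s1 p = μ / 2 * (ptd φ p) ^ 2 - T / 2 * (pxd φ p) ^ 2 - γ / μ * s1 p) :
    ∀ p : ℝ × ℝ,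
      ptd (fun q => (μ / 2 * (ptd φ q) ^ 2 + T / 2 * (pxd φ q) ^ 2 + γ / μ * s1 q)
          * Real.exp (γ / μ * q.1)) p
        - pxd (fun q => T * pxd φ q * ptd φ q * Real.exp (γ / μ * q.1)) p = 0 := by
  intro p
  have hu : Differentiable ℝ (ptd φ) := (hφ.ptd (n := 1)).differentiable one_ne_zero
  have hv : Differentiable ℝ (pxd φ) := (hφ.pxd (n := 1)).differentiable one_ne_zero
  have hs : Differentiable ℝ s1 := hs1.differentiable one_ne_zero
  have hγ : γ / μ * μ = γ := div_mul_cancel₀ γ hμ.ne'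
  rw [ptd_mul_exp _ (by fun_prop), ptd_energy_density _ _ _ (hu p) (hv p) (hs p), pxd_mul_exp,
    pxd_const_mul_mul _ (hv p) (hu p), ← ptd_pxd_comm hφ, hs1eq p]
  linear_combination exp (γ / μ * p.1) * (ptd φ p * hwave p + ptd φ p ^ 2 * hγ)
end

section
/- Let m, l > 0 and g, γ ∈ ℝ. Let θ, φ : ℝ → ℝ be of class C² satisfying ml² θ'' + γ l θ' − ml² sinθ cosθ (φ')² + mgl sinθ = 0 and (d/dt)[ ml² sin²θ φ' ] + γ l sin²θ φ' = 0, and let S : ℝ → ℝ be of class C¹ with S'(t) = (ml²/2)( θ'(t)² + sin²(θ(t)) φ'(t)² ) + mgl cos(θ(t)) − (γ/(ml)) S(t). Then the function t ↦ H(t) e^{(γ/(ml))t} is constant, where H(t) = (ml²/2)( θ'(t)² + sin²(θ(t)) φ'(t)² ) − mgl cos(θ(t)) + (γ/(ml)) S(t) is the Hamiltonian (total energy) of the dissipative spherical pendulum. -/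
/-!
Write `K = (ml²/2)(θ'² + sin²θ φ'²)` and `E = K − mgl cos θ`. Multiplying the `θ`-equation by `θ'`
and the `φ`-equation by `φ'` and adding shows that friction dissipates the mechanical energy at
the rate `E' = −γl(θ'² + sin²θ φ'²) = −2cK`, where `c = γ/(ml)`. Since `H = E + cS` and
`S' = K + mgl cos θ − cS`, this gives `H' = −cH`, so `H(t)e^{ct}` has zero derivative.
-/

open Real

theorem mul_exp_eq_of_hasDerivAt_neg_mul {f : ℝ → ℝ} {c : ℝ}
    (hf : ∀ t, HasDerivAt f (-c * f t) t) (t₁ t₂ : ℝ) :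
    f t₁ * exp (c * t₁) = f t₂ * exp (c * t₂) := by
  have hderiv : ∀ t, HasDerivAt (fun τ => f τ * exp (c * τ)) 0 t := fun t => by
    have hexp : HasDerivAt (fun τ => exp (c * τ)) (exp (c * t) * c) t := by
      simpa using ((hasDerivAt_id t).const_mul c).exp
    exact ((hf t).mul hexp).congr_deriv (by ring)
  exact is_const_of_deriv_eq_zero (fun t => (hderiv t).differentiableAt)
    (fun t => (hderiv t).deriv) t₁ t₂

section SphericalPendulum

variable {m l g γ : ℝ} {θ φ : ℝ → ℝ} {t : ℝ}

theorem hasDerivAt_sin_sq_comp (hθ : DifferentiableAt ℝ θ t) :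
    HasDerivAt (fun τ => sin (θ τ) ^ 2) (2 * sin (θ t) * cos (θ t) * deriv θ t) t :=
  (hθ.hasDerivAt.sin.fun_pow 2).congr_deriv (by ring)

theorem hasDerivAt_angularMomentum (hθ : DifferentiableAt ℝ θ t)
    (hφ' : DifferentiableAt ℝ (deriv φ) t) :
    HasDerivAt (fun τ => m * l ^ 2 * sin (θ τ) ^ 2 * deriv φ τ)
      (m * l ^ 2 * (2 * sin (θ t) * cos (θ t) * deriv θ t * deriv φ t
        + sin (θ t) ^ 2 * deriv (deriv φ) t)) t :=
  (((hasDerivAt_sin_sq_comp hθ).const_mul (m * l ^ 2)).mul hφ'.hasDerivAt).congr_deriv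
    (by ring)

theorem hasDerivAt_kineticEnergy (hθ : DifferentiableAt ℝ θ t)
    (hθ' : DifferentiableAt ℝ (deriv θ) t) (hφ' : DifferentiableAt ℝ (deriv φ) t) :
    HasDerivAt (fun τ => m * l ^ 2 / 2 * (deriv θ τ ^ 2 + sin (θ τ) ^ 2 * deriv φ τ ^ 2))
      (m * l ^ 2 * (deriv θ t * deriv (deriv θ) t
        + sin (θ t) * cos (θ t) * deriv θ t * deriv φ t ^ 2
        + sin (θ t) ^ 2 * deriv φ t * deriv (deriv φ) t)) t :=
  (((hθ'.hasDerivAt.fun_pow 2).add ((hasDerivAt_sin_sq_comp hθ).mul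
    (hφ'.hasDerivAt.fun_pow 2))).const_mul (m * l ^ 2 / 2)).congr_deriv (by ring)

theorem hasDerivAt_mechanicalEnergy (hθ : DifferentiableAt ℝ θ t)
    (hθ' : DifferentiableAt ℝ (deriv θ) t) (hφ' : DifferentiableAt ℝ (deriv φ) t)
    (hθeq : m * l ^ 2 * deriv (deriv θ) t + γ * l * deriv θ t
      - m * l ^ 2 * sin (θ t) * cos (θ t) * deriv φ t ^ 2 + m * g * l * sin (θ t) = 0)
    (hφeq : deriv (fun τ => m * l ^ 2 * sin (θ τ) ^ 2 * deriv φ τ) t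
      + γ * l * sin (θ t) ^ 2 * deriv φ t = 0) :
    HasDerivAt (fun τ => m * l ^ 2 / 2 * (deriv θ τ ^ 2 + sin (θ τ) ^ 2 * deriv φ τ ^ 2)
        - m * g * l * cos (θ τ))
      (-(γ * l * (deriv θ t ^ 2 + sin (θ t) ^ 2 * deriv φ t ^ 2))) t := by
  rw [(hasDerivAt_angularMomentum hθ hφ').deriv] at hφeq
  have hcos := hθ.hasDerivAt.cos.const_mul (m * g * l)
  refine ((hasDerivAt_kineticEnergy hθ hθ' hφ').sub hcos).congr_deriv ?_
  linear_combination deriv θ t * hθeq + deriv φ t * hφeq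

end SphericalPendulum

theorem spherical_pendulum_noether_time_translation_general
    (m l g γ : ℝ) (hm : 0 < m) (hl : 0 < l)
    (θ φ : ℝ → ℝ) (hθ : ContDiff ℝ 2 θ) (hφ : ContDiff ℝ 2 φ)
    (hθeq : ∀ t, m * l ^ 2 * deriv (deriv θ) t + γ * l * deriv θ t
      - m * l ^ 2 * Real.sin (θ t) * Real.cos (θ t) * deriv φ t ^ 2
      + m * g * l * Real.sin (θ t) = 0)
    (hφeq : ∀ t, deriv (fun τ => m * l ^ 2 * Real.sin (θ τ) ^ 2 * deriv φ τ) t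
      + γ * l * Real.sin (θ t) ^ 2 * deriv φ t = 0)
    (S : ℝ → ℝ)
    (hSeq : ∀ t, HasDerivAt S
      (m * l ^ 2 / 2 * (deriv θ t ^ 2 + Real.sin (θ t) ^ 2 * deriv φ t ^ 2)
        + m * g * l * Real.cos (θ t) - γ / (m * l) * S t) t)
    (H : ℝ → ℝ)
    (hH : H = fun t =>
      m * l ^ 2 / 2 * (deriv θ t ^ 2 + Real.sin (θ t) ^ 2 * deriv φ t ^ 2)
        - m * g * l * Real.cos (θ t) + γ / (m * l) * S t) :
    ∀ t₁ t₂ : ℝ,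
      H t₁ * Real.exp (γ / (m * l) * t₁) = H t₂ * Real.exp (γ / (m * l) * t₂) := by
  have hγ : γ / (m * l) * (m * l) = γ := div_mul_cancel₀ γ (by positivity)
  refine mul_exp_eq_of_hasDerivAt_neg_mul fun t => ?_
  have hE := hasDerivAt_mechanicalEnergy (hθ.differentiable two_ne_zero t)
    (hθ.differentiable_deriv_two t) (hφ.differentiable_deriv_two t) (hθeq t) (hφeq t)
  subst hH
  refine (hE.add ((hSeq t).const_mul (γ / (m * l)))).congr_deriv ?_
  linear_combination l * (deriv θ t ^ 2 + sin (θ t) ^ 2 * deriv φ t ^ 2) * hγ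

/-- **Noether conserved quantity under time translations for the dissipative spherical
pendulum.** Along solutions of the equations of motion with
`S' = (ml²/2)(θ'² + sin²θ φ'²) + mgl cosθ − (γ/(ml))S`, the quantity `H(t)e^{(γ/(ml))t}`
is constant, where `H = (ml²/2)(θ'² + sin²θ φ'²) − mgl cosθ + (γ/(ml))S` is the total
energy. -/
theorem spherical_pendulum_noether_time_translation
    (m l g γ : ℝ) (hm : 0 < m) (hl : 0 < l)
    (θ φ : ℝ → ℝ) (hθ : ContDiff ℝ 2 θ) (hφ : ContDiff ℝ 2 φ)
    (hθeq : ∀ t, m * l ^ 2 * deriv (deriv θ) t + γ * l * deriv θ t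
      - m * l ^ 2 * Real.sin (θ t) * Real.cos (θ t) * deriv φ t ^ 2
      + m * g * l * Real.sin (θ t) = 0)
    (hφeq : ∀ t, deriv (fun τ => m * l ^ 2 * Real.sin (θ τ) ^ 2 * deriv φ τ) t
      + γ * l * Real.sin (θ t) ^ 2 * deriv φ t = 0)
    (S : ℝ → ℝ) (hS : ContDiff ℝ 1 S)
    (hSeq : ∀ t, HasDerivAt S
      (m * l ^ 2 / 2 * (deriv θ t ^ 2 + Real.sin (θ t) ^ 2 * deriv φ t ^ 2)
        + m * g * l * Real.cos (θ t) - γ / (m * l) * S t) t)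
    (H : ℝ → ℝ)
    (hH : H = fun t =>
      m * l ^ 2 / 2 * (deriv θ t ^ 2 + Real.sin (θ t) ^ 2 * deriv φ t ^ 2)
        - m * g * l * Real.cos (θ t) + γ / (m * l) * S t) :
    ∀ t₁ t₂ : ℝ,
      H t₁ * Real.exp (γ / (m * l) * t₁) = H t₂ * Real.exp (γ / (m * l) * t₂) :=
  spherical_pendulum_noether_time_translation_general m l g γ hm hl θ φ hθ hφ hθeq hφeq S hSeq H hH
end

section
/- Let m, l > 0 and g, γ ∈ ℝ. Let θ, φ : ℝ → ℝ be of class C² satisfying ml² θ'' + γ l θ' − ml² sinθ cosθ (φ')² + mgl sinθ = 0 and (d/dt)[ ml² sin²θ φ' ] + γ l sin²θ φ' = 0, and let S : ℝ → ℝ be of class C¹ with S'(t) = (ml²/2)( θ'² + sin²θ (φ')² ) + mgl cosθ − (γ/(ml)) S and S(0) = 0. Then the total energy E(t) := (ml²/2)( θ'(t)² + sin²(θ(t)) φ'(t)² ) − mgl cos(θ(t)) + (γ/(ml)) S(t) satisfies E(t) = E₀ e^{−(γ/(ml)) t} for all t, where E₀ = (ml²/2)( θ'(0)² + sin²(θ(0))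 φ'(0)² ) − mgl cos(θ(0)) is the initial mechanical energy; i.e. the total energy decreases exponentially with time. -/
/-!
Multiplying the θ-equation by `θ'` and the φ-equation by `φ'` and adding gives
`(T - V)' = -(2γ/(ml)) T` for the kinetic energy `T = (ml²/2)(θ'² + sin²θ φ'²)` and the potential
`V = -mgl cosθ`. Since `S' = T - V - (γ/(ml)) S`, the total energy `E = T + V + (γ/(ml)) S` then
solves `E' = -(γ/(ml)) E`, and uniqueness for this linear ODE gives
`E t = E 0 · exp (-(γ/(ml)) t)`, where `E 0 = E₀` because `S 0 = 0`.
-/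

open Real

theorem eq_mul_exp_of_hasDerivAt_const_mul {E : ℝ → ℝ} {c : ℝ}
    (hE : ∀ t, HasDerivAt E (c * E t) t) (t : ℝ) : E t = E 0 * exp (c * t) := by
  have hexp (s : ℝ) : HasDerivAt (fun s => E 0 * exp (c * s)) (c * (E 0 * exp (c * s))) s :=
    (((hasDerivAt_id' s).const_mul c).exp.const_mul (E 0)).congr_deriv (by ring)
  exact congrFun (ODE_solution_unique_univ (v := fun _ x => c * x) (s := fun _ => Set.univ)
    (fun _ => (lipschitzWith_smul c).lipschitzOnWith) (fun s => ⟨hE s, trivial⟩)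
    (fun s => ⟨hexp s, trivial⟩) (t₀ := 0) (by simp)) t

namespace SphericalPendulum

noncomputable def speedSq (θ φ : ℝ → ℝ) (t : ℝ) : ℝ :=
  deriv θ t ^ 2 + sin (θ t) ^ 2 * deriv φ t ^ 2

noncomputable def mechanicalEnergy (m g l : ℝ) (θ φ : ℝ → ℝ) (t : ℝ) : ℝ :=
  m * l ^ 2 / 2 * speedSq θ φ t - m * g * l * cos (θ t)

variable {m l g γ : ℝ} {θ φ : ℝ → ℝ} {t : ℝ}

theorem hasDerivAt_speedSq (hθ : DifferentiableAt ℝ θ t)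
    (hθ' : DifferentiableAt ℝ (deriv θ) t) (hφ' : DifferentiableAt ℝ (deriv φ) t) :
    HasDerivAt (speedSq θ φ)
      (2 * deriv θ t * deriv (deriv θ) t + 2 * sin (θ t) * cos (θ t) * deriv θ t * deriv φ t ^ 2
        + 2 * sin (θ t) ^ 2 * deriv φ t * deriv (deriv φ) t) t :=
  ((hθ'.hasDerivAt.pow 2).add ((hθ.hasDerivAt.sin.pow 2).mul (hφ'.hasDerivAt.pow 2))).congr_deriv
    (by push_cast [Pi.pow_apply]; ring)

theorem hasDerivAt_mechanicalEnergy (hθ : DifferentiableAt ℝ θ t)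
    (hθ' : DifferentiableAt ℝ (deriv θ) t) (hφ' : DifferentiableAt ℝ (deriv φ) t)
    (hθeq : m * l ^ 2 * deriv (deriv θ) t + γ * l * deriv θ t
      - m * l ^ 2 * sin (θ t) * cos (θ t) * deriv φ t ^ 2 + m * g * l * sin (θ t) = 0)
    (hφeq : deriv (fun τ => m * l ^ 2 * sin (θ τ) ^ 2 * deriv φ τ) t
      + γ * l * sin (θ t) ^ 2 * deriv φ t = 0) :
    HasDerivAt (mechanicalEnergy m g l θ φ) (-(γ * l) * speedSq θ φ t) t := by
  have hmomentum : HasDerivAt (fun τ => m * l ^ 2 * sin (θ τ) ^ 2 * deriv φ τ)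
      (m * l ^ 2 * (2 * sin (θ t) * cos (θ t) * deriv θ t * deriv φ t
        + sin (θ t) ^ 2 * deriv (deriv φ) t)) t :=
    (((hθ.hasDerivAt.sin.pow 2).const_mul (m * l ^ 2)).mul hφ'.hasDerivAt).congr_deriv
      (by push_cast [Pi.pow_apply]; ring)
  rw [hmomentum.deriv] at hφeq
  refine (((hasDerivAt_speedSq hθ hθ' hφ').const_mul (m * l ^ 2 / 2)).sub
    (hθ.hasDerivAt.cos.const_mul (m * g * l))).congr_deriv ?_
  unfold speedSq
  linear_combination deriv θ t * hθeq + deriv φ t * hφeq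

theorem hasDerivAt_totalEnergy (hm : m ≠ 0) (hl : l ≠ 0) {S : ℝ → ℝ}
    (hθ : DifferentiableAt ℝ θ t)
    (hθ' : DifferentiableAt ℝ (deriv θ) t) (hφ' : DifferentiableAt ℝ (deriv φ) t)
    (hθeq : m * l ^ 2 * deriv (deriv θ) t + γ * l * deriv θ t
      - m * l ^ 2 * sin (θ t) * cos (θ t) * deriv φ t ^ 2 + m * g * l * sin (θ t) = 0)
    (hφeq : deriv (fun τ => m * l ^ 2 * sin (θ τ) ^ 2 * deriv φ τ) t
      + γ * l * sin (θ t) ^ 2 * deriv φ t = 0)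
    (hS : HasDerivAt S
      (m * l ^ 2 / 2 * speedSq θ φ t + m * g * l * cos (θ t) - γ / (m * l) * S t) t) :
    HasDerivAt (fun τ => mechanicalEnergy m g l θ φ τ + γ / (m * l) * S τ)
      (-(γ / (m * l)) * (mechanicalEnergy m g l θ φ t + γ / (m * l) * S t)) t := by
  refine ((hasDerivAt_mechanicalEnergy hθ hθ' hφ' hθeq hφeq).add
    (hS.const_mul (γ / (m * l)))).congr_deriv ?_
  unfold mechanicalEnergy
  field_simp
  ring

end SphericalPendulum

theorem spherical_pendulum_energy_decay_general
    (m l g γ : ℝ) (hm : 0 < m) (hl : 0 < l)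
    (θ φ : ℝ → ℝ) (hθ : ContDiff ℝ 2 θ) (hφ : ContDiff ℝ 2 φ)
    (hθeq : ∀ t, m * l ^ 2 * deriv (deriv θ) t + γ * l * deriv θ t
      - m * l ^ 2 * Real.sin (θ t) * Real.cos (θ t) * deriv φ t ^ 2
      + m * g * l * Real.sin (θ t) = 0)
    (hφeq : ∀ t, deriv (fun τ => m * l ^ 2 * Real.sin (θ τ) ^ 2 * deriv φ τ) t
      + γ * l * Real.sin (θ t) ^ 2 * deriv φ t = 0)
    (S : ℝ → ℝ)
    (hSeq : ∀ t, HasDerivAt S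
      (m * l ^ 2 / 2 * (deriv θ t ^ 2 + Real.sin (θ t) ^ 2 * deriv φ t ^ 2)
        + m * g * l * Real.cos (θ t) - γ / (m * l) * S t) t)
    (hS0 : S 0 = 0)
    (E : ℝ → ℝ)
    (hE : E = fun t =>
      m * l ^ 2 / 2 * (deriv θ t ^ 2 + Real.sin (θ t) ^ 2 * deriv φ t ^ 2)
        - m * g * l * Real.cos (θ t) + γ / (m * l) * S t)
    (E₀ : ℝ)
    (hE₀ : E₀ = m * l ^ 2 / 2 * (deriv θ 0 ^ 2 + Real.sin (θ 0) ^ 2 * deriv φ 0 ^ 2)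
      - m * g * l * Real.cos (θ 0)) :
    ∀ t : ℝ, E t = E₀ * Real.exp (-(γ / (m * l)) * t) := by
  have hdecay (t : ℝ) : HasDerivAt E (-(γ / (m * l)) * E t) t := by
    subst hE
    exact SphericalPendulum.hasDerivAt_totalEnergy hm.ne' hl.ne' (hθ.differentiable two_ne_zero t)
      (hθ.differentiable_deriv_two t) (hφ.differentiable_deriv_two t) (hθeq t) (hφeq t) (hSeq t)
  have hE0 : E 0 = E₀ := by simp [hE, hE₀, hS0]
  intro t
  rw [eq_mul_exp_of_hasDerivAt_const_mul hdecay t, hE0]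

/-- **Exponential decay of the total energy of the dissipative spherical pendulum.**
Along solutions of the equations of motion with
`S' = (ml²/2)(θ'² + sin²θ φ'²) + mgl cosθ − (γ/(ml))S` and `S(0) = 0`, the total energy
`E(t) = (ml²/2)(θ'² + sin²θ φ'²) − mgl cosθ + (γ/(ml))S` satisfies
`E(t) = E₀ e^{−(γ/(ml))t}`, where `E₀` is the initial mechanical energy. -/
theorem spherical_pendulum_energy_decay
    (m l g γ : ℝ) (hm : 0 < m) (hl : 0 < l)
    (θ φ : ℝ → ℝ) (hθ : ContDiff ℝ 2 θ) (hφ : ContDiff ℝ 2 φ)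
    (hθeq : ∀ t, m * l ^ 2 * deriv (deriv θ) t + γ * l * deriv θ t
      - m * l ^ 2 * Real.sin (θ t) * Real.cos (θ t) * deriv φ t ^ 2
      + m * g * l * Real.sin (θ t) = 0)
    (hφeq : ∀ t, deriv (fun τ => m * l ^ 2 * Real.sin (θ τ) ^ 2 * deriv φ τ) t
      + γ * l * Real.sin (θ t) ^ 2 * deriv φ t = 0)
    (S : ℝ → ℝ) (hS : ContDiff ℝ 1 S)
    (hSeq : ∀ t, HasDerivAt S
      (m * l ^ 2 / 2 * (deriv θ t ^ 2 + Real.sin (θ t) ^ 2 * deriv φ t ^ 2)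
        + m * g * l * Real.cos (θ t) - γ / (m * l) * S t) t)
    (hS0 : S 0 = 0)
    (E : ℝ → ℝ)
    (hE : E = fun t =>
      m * l ^ 2 / 2 * (deriv θ t ^ 2 + Real.sin (θ t) ^ 2 * deriv φ t ^ 2)
        - m * g * l * Real.cos (θ t) + γ / (m * l) * S t)
    (E₀ : ℝ)
    (hE₀ : E₀ = m * l ^ 2 / 2 * (deriv θ 0 ^ 2 + Real.sin (θ 0) ^ 2 * deriv φ 0 ^ 2)
      - m * g * l * Real.cos (θ 0)) :
    ∀ t : ℝ, E t = E₀ * Real.exp (-(γ / (m * l)) * t) :=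
  spherical_pendulum_energy_decay_general m l g γ hm hl θ φ hθ hφ hθeq hφeq S hSeq hS0 E hE E₀ hE₀
end
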